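/- arXiv:1412.6769 — 8 statements merged into one kernel-verified Lean document; each statement's English description precedes it below -/
import Mathlib

section
/- Let S be a finite set, let P and Q be probability distributions on S, let G : S → [0,∞) be a function, and let α > 1. Assume ∑_{i∈S} G_i P_i > 0 and ∑_{i∈S} G_i Q_i > 0. Then (1/(α−1))·ln(∑_{i∈S} G_i^{α−1} P_i) ≤ (1/α)·ln(∑_{i∈S} G_i^{α} Q_i) + D_α(P‖Q). -/
open scoped BigOperators

/-- Extended-real logarithm, with `ln 0 = -∞`. -/
noncomputable def elog (x : ℝ) : EReal := if x = 0 then ⊥ else ((Real.log x : ℝ) : EReal)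

open Classical in
/-- Rényi divergence of order `α` between probability distributions on a finite set,
with the `1/(α(α-1))` normalization; `+∞` if the support condition fails. -/
noncomputable def renyiDiv {S : Type*} [Fintype S] (α : ℝ) (P Q : S → ℝ) : EReal :=
  if ∀ i, Q i = 0 → P i = 0 then
    (((1 / (α * (α - 1))) * Real.log (∑ i, P i ^ α * Q i ^ (1 - α)) : ℝ) : EReal)
  else ⊤

/-!
With `p = α / (α - 1)` and `q = α`, Hölder's inequality applied to the factorization
`G^(α-1) P = (G^(α-1) Q^(1/p)) · (P Q^(-1/p))` (valid where `Q = 0` thanks to `P ≪ Q`) gives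
`∑ G^(α-1) P ≤ (∑ G^α Q)^(1/p) (∑ P^α Q^(1-α))^(1/q)`; taking logarithms and dividing by
`α - 1` is the claim. When `P ≪ Q` fails the divergence is `+∞`, and the right-hand side is `+∞`
because `∑ G^α Q > 0` keeps its first summand finite.
-/

open Finset Real

lemma elog_of_ne_zero {x : ℝ} (hx : x ≠ 0) : elog x = ((Real.log x : ℝ) : EReal) :=
  if_neg hx

section

variable {ι : Type*} (s : Finset ι) {P Q G : ι → ℝ} {α : ℝ}

lemma sum_rpow_mul_pos (hG : ∀ i ∈ s, 0 ≤ G i) (hP : ∀ i ∈ s, 0 ≤ P i)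
    (h : 0 < ∑ i ∈ s, G i * P i) (β : ℝ) : 0 < ∑ i ∈ s, G i ^ β * P i := by
  obtain ⟨i, hi, hGPi⟩ := exists_lt_of_sum_lt (f := fun _ => (0 : ℝ)) (by simpa using h)
  have hGi : 0 < G i := pos_of_mul_pos_left hGPi (hP i hi)
  have hPi : 0 < P i := pos_of_mul_pos_right hGPi (hG i hi)
  exact sum_pos' (fun j hj => mul_nonneg (rpow_nonneg (hG j hj) β) (hP j hj))
    ⟨i, hi, mul_pos (rpow_pos_of_pos hGi β) hPi⟩

lemma sum_rpow_sub_one_mul_le (hα : 1 < α) (hP : ∀ i ∈ s, 0 ≤ P i) (hQ : ∀ i ∈ s, 0 ≤ Q i)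
    (hG : ∀ i ∈ s, 0 ≤ G i) (hPQ : ∀ i ∈ s, Q i = 0 → P i = 0) :
    ∑ i ∈ s, G i ^ (α - 1) * P i ≤
      (∑ i ∈ s, G i ^ α * Q i) ^ ((α - 1) / α) * (∑ i ∈ s, P i ^ α * Q i ^ (1 - α)) ^ (1 / α) := by
  have hα₁ : α - 1 ≠ 0 := sub_ne_zero.2 hα.ne'
  have hpq : (α / (α - 1)).HolderConjugate α := (HolderConjugate.conjExponent hα).symm
  set f : ι → ℝ := fun i => G i ^ (α - 1) * Q i ^ ((α - 1) / α)
  set g : ι → ℝ := fun i => P i * Q i ^ ((1 - α) / α)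
  have hfg : ∀ i ∈ s, f i * g i = G i ^ (α - 1) * P i := by
    intro i hi
    rcases (hQ i hi).lt_or_eq with hQi | hQi
    · have : Q i ^ ((α - 1) / α) * Q i ^ ((1 - α) / α) = 1 := by
        rw [← rpow_add hQi, show (α - 1) / α + (1 - α) / α = 0 by ring, rpow_zero]
      linear_combination G i ^ (α - 1) * P i * this
    · simp [f, g, hPQ i hi hQi.symm]
  have hf : ∀ i ∈ s, f i ^ (α / (α - 1)) = G i ^ α * Q i := by
    intro i hi
    rw [mul_rpow (rpow_nonneg (hG i hi) _) (rpow_nonneg (hQ i hi) _),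
      ← rpow_mul (hG i hi), ← rpow_mul (hQ i hi)]
    field_simp
    rw [rpow_one]
  have hg : ∀ i ∈ s, g i ^ α = P i ^ α * Q i ^ (1 - α) := by
    intro i hi
    rw [mul_rpow (hP i hi) (rpow_nonneg (hQ i hi) _), ← rpow_mul (hQ i hi)]
    field_simp
  have holder := inner_le_Lp_mul_Lq_of_nonneg s (f := f) (g := g) hpq
    (fun i hi => mul_nonneg (rpow_nonneg (hG i hi) _) (rpow_nonneg (hQ i hi) _))
    (fun i hi => mul_nonneg (hP i hi) (rpow_nonneg (hQ i hi) _))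
  rwa [sum_congr rfl hfg, sum_congr rfl hf, sum_congr rfl hg, one_div_div] at holder

end

lemma log_le_of_le_rpow_mul_rpow {A B C α : ℝ} (hα : 1 < α) (hA : 0 < A) (hB : 0 ≤ B)
    (hC : 0 ≤ C) (h : A ≤ B ^ ((α - 1) / α) * C ^ (1 / α)) :
    1 / (α - 1) * Real.log A ≤ 1 / α * Real.log B + 1 / (α * (α - 1)) * Real.log C := by
  have hα₀ : 0 < α := by linarith
  have hα₁ : 0 < α - 1 := by linarith
  -- `0 ^ x = 0` for `x ≠ 0`, so `A > 0` forces both factors to be positive.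
  have hB : 0 < B := hB.lt_of_ne (by rintro rfl; rw [zero_rpow (by positivity)] at h; linarith)
  have hC : 0 < C := hC.lt_of_ne (by rintro rfl; rw [zero_rpow (by positivity)] at h; linarith)
  have hlog : Real.log A ≤ (α - 1) / α * Real.log B + 1 / α * Real.log C := by
    calc Real.log A ≤ Real.log (B ^ ((α - 1) / α) * C ^ (1 / α)) := log_le_log hA h
      _ = (α - 1) / α * Real.log B + 1 / α * Real.log C := by
        rw [log_mul (by positivity) (by positivity), log_rpow hB, log_rpow hC]
  calc 1 / (α - 1) * Real.log A
      ≤ 1 / (α - 1) * ((α - 1) / α * Real.log B + 1 / α * Real.log C) := by gcongr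
    _ = 1 / α * Real.log B + 1 / (α * (α - 1)) * Real.log C := by field_simp

theorem lpcb_functional_finite_general {S : Type*} [Fintype S] (P Q G : S → ℝ) (α : ℝ)
    (hα : 1 < α)
    (hPnonneg : ∀ i, 0 ≤ P i)
    (hQnonneg : ∀ i, 0 ≤ Q i)
    (hGnonneg : ∀ i, 0 ≤ G i)
    (hGP : 0 < ∑ i, G i * P i) (hGQ : 0 < ∑ i, G i * Q i) :
    ((1 / (α - 1) : ℝ) : EReal) * elog (∑ i, G i ^ (α - 1) * P i)
      ≤ ((1 / α : ℝ) : EReal) * elog (∑ i, G i ^ α * Q i) + renyiDiv α P Q := by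
  have hA := sum_rpow_mul_pos univ (fun i _ => hGnonneg i) (fun i _ => hPnonneg i) hGP (α - 1)
  have hB := sum_rpow_mul_pos univ (fun i _ => hGnonneg i) (fun i _ => hQnonneg i) hGQ α
  rw [elog_of_ne_zero hA.ne', elog_of_ne_zero hB.ne', renyiDiv]
  split_ifs with hPQ
  · have hC : 0 ≤ ∑ i, P i ^ α * Q i ^ (1 - α) :=
      sum_nonneg fun i _ => mul_nonneg (rpow_nonneg (hPnonneg i) _) (rpow_nonneg (hQnonneg i) _)
    exact_mod_cast log_le_of_le_rpow_mul_rpow hα hA hB.le hC <|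
      sum_rpow_sub_one_mul_le univ hα (fun i _ => hPnonneg i) (fun i _ => hQnonneg i)
        (fun i _ => hGnonneg i) (fun i _ => hPQ i)
  · rw [← EReal.coe_mul (1 / α), EReal.add_top_of_ne_bot (EReal.coe_ne_bot _)]
    exact le_top

theorem lpcb_functional_finite {S : Type*} [Fintype S] (P Q G : S → ℝ) (α : ℝ)
    (hα : 1 < α)
    (hPnonneg : ∀ i, 0 ≤ P i) (hPsum : ∑ i, P i = 1)
    (hQnonneg : ∀ i, 0 ≤ Q i) (hQsum : ∑ i, Q i = 1)
    (hGnonneg : ∀ i, 0 ≤ G i)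
    (hGP : 0 < ∑ i, G i * P i) (hGQ : 0 < ∑ i, G i * Q i) :
    ((1 / (α - 1) : ℝ) : EReal) * elog (∑ i, G i ^ (α - 1) * P i)
      ≤ ((1 / α : ℝ) : EReal) * elog (∑ i, G i ^ α * Q i) + renyiDiv α P Q :=
  lpcb_functional_finite_general P Q G α hα hPnonneg hQnonneg hGnonneg hGP hGQ
end

section
/- Let S be a finite set, let P and Q be probability distributions on S, let A ⊆ S be an event, and let α > 1. Then (1/α)·ln P(A) ≥ (1/(α−1))·ln Q(A) − D_α(Q‖P), where P(A) = ∑_{i∈A} P_i and Q(A) = ∑_{i∈A} Q_i (with ln 0 = −∞). -/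
open scoped BigOperators

/-!
Writing `Q(A) = ∑_{i ∈ A} P i · (Q i / P i)`, the weighted Hölder inequality with weights `P`
and exponent `α` gives `Q(A) ≤ P(A) ^ (1 - 1/α) · (∑_i Q i ^ α P i ^ (1 - α)) ^ (1/α)`.
Taking logarithms and dividing by `α - 1` is the claim; the degenerate cases `Q(A) = 0` and
`Q` not absolutely continuous with respect to `P` make the right-hand side `-∞`.
-/

open Real Finset

lemma mul_div_rpow_eq_rpow_mul_rpow {p q α : ℝ} (hp : 0 ≤ p) (hq : 0 ≤ q) (hpq : p = 0 → q = 0)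
    (hα : α ≠ 0) : p * (q / p) ^ α = q ^ α * p ^ (1 - α) := by
  rcases hp.eq_or_lt with rfl | hp
  · simp [hpq rfl, zero_rpow hα]
  · rw [div_rpow hq hp.le, rpow_sub hp, rpow_one]
    field_simp

lemma sum_le_rpow_sum_mul_rpow_sum {S : Type*} [Fintype S] {P Q : S → ℝ} (A : Finset S)
    {α : ℝ} (hα : 1 ≤ α) (hP : ∀ i, 0 ≤ P i) (hQ : ∀ i, 0 ≤ Q i)
    (hQP : ∀ i, P i = 0 → Q i = 0) :
    ∑ i ∈ A, Q i ≤ (∑ i ∈ A, P i) ^ (1 - α⁻¹) * (∑ i, Q i ^ α * P i ^ (1 - α)) ^ α⁻¹ := by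
  have hterm (i : S) : 0 ≤ Q i ^ α * P i ^ (1 - α) := by
    have := hP i; have := hQ i; positivity
  calc ∑ i ∈ A, Q i = ∑ i ∈ A, P i * (Q i / P i) := by
        refine sum_congr rfl fun i _ => ?_
        rcases eq_or_ne (P i) 0 with h | h
        · simp [h, hQP i h]
        · field_simp
    _ ≤ (∑ i ∈ A, P i) ^ (1 - α⁻¹) * (∑ i ∈ A, P i * (Q i / P i) ^ α) ^ α⁻¹ :=
        inner_le_weight_mul_Lp_of_nonneg A hα P _ hP fun i => div_nonneg (hQ i) (hP i)
    _ = (∑ i ∈ A, P i) ^ (1 - α⁻¹) * (∑ i ∈ A, Q i ^ α * P i ^ (1 - α)) ^ α⁻¹ := by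
        simp only [mul_div_rpow_eq_rpow_mul_rpow (hP _) (hQ _) (hQP _) (by positivity : α ≠ 0)]
    _ ≤ (∑ i ∈ A, P i) ^ (1 - α⁻¹) * (∑ i, Q i ^ α * P i ^ (1 - α)) ^ α⁻¹ := by
        gcongr (∑ i ∈ A, P i) ^ (1 - α⁻¹) * ?_ ^ α⁻¹
        · exact rpow_nonneg (sum_nonneg fun i _ => hP i) _
        · exact sum_nonneg fun i _ => hterm i
        · exact sum_le_sum_of_subset_of_nonneg A.subset_univ fun i _ _ => hterm i

lemma pos_and_pos_of_rpow_mul_rpow_pos {y z a b : ℝ} (ha : a ≠ 0) (hb : b ≠ 0) (hy : 0 ≤ y)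
    (hz : 0 ≤ z) (h : 0 < y ^ a * z ^ b) : 0 < y ∧ 0 < z := by
  constructor
  · refine hy.lt_of_ne fun hy0 => h.ne' ?_
    rw [← hy0, zero_rpow ha, zero_mul]
  · refine hz.lt_of_ne fun hz0 => h.ne' ?_
    rw [← hz0, zero_rpow hb, mul_zero]

lemma inv_sub_one_mul_log_sub_le_of_le_rpow_mul_rpow {x y z α : ℝ} (hα : 1 < α) (hx : 0 < x)
    (hy : 0 < y) (hz : 0 < z) (h : x ≤ y ^ (1 - α⁻¹) * z ^ α⁻¹) :
    1 / (α - 1) * log x - 1 / (α * (α - 1)) * log z ≤ 1 / α * log y := by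
  have hlog : log x ≤ (1 - α⁻¹) * log y + α⁻¹ * log z := by
    have := log_le_log hx h
    rwa [log_mul (rpow_pos_of_pos hy _).ne' (rpow_pos_of_pos hz _).ne', log_rpow hy,
      log_rpow hz] at this
  have hα1 : 0 < α - 1 := by linarith
  have hα0 : 0 < α := by linarith
  have key : α * log x - log z ≤ (α - 1) * log y := by
    have := mul_le_mul_of_nonneg_left hlog hα0.le
    field_simp at this
    linarith
  rw [← mul_le_mul_iff_of_pos_left (mul_pos hα0 hα1)]
  field_simp
  linarith

theorem lpcb_finite_lower_general {S : Type*} [Fintype S] (P Q : S → ℝ) (A : Finset S) (α : ℝ)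
    (hα : 1 < α)
    (hPnonneg : ∀ i, 0 ≤ P i)
    (hQnonneg : ∀ i, 0 ≤ Q i) :
    ((1 / α : ℝ) : EReal) * elog (∑ i ∈ A, P i)
      ≥ ((1 / (α - 1) : ℝ) : EReal) * elog (∑ i ∈ A, Q i) - renyiDiv α Q P := by
  by_cases hQP : ∀ i, P i = 0 → Q i = 0
  swap
  · simp [renyiDiv, hQP]
  rcases (sum_nonneg fun i (_ : i ∈ A) => hQnonneg i).eq_or_lt with hQA | hQA
  · have hcoef : (0 : EReal) < ((1 / (α - 1) : ℝ) : EReal) :=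
      EReal.coe_pos.mpr (one_div_pos.mpr (by linarith))
    rw [show elog (∑ i ∈ A, Q i) = ⊥ from if_pos hQA.symm, EReal.mul_bot_of_pos hcoef,
      EReal.bot_sub]
    exact bot_le
  have holder := sum_le_rpow_sum_mul_rpow_sum A hα.le hPnonneg hQnonneg hQP
  obtain ⟨hPA, hZ⟩ := pos_and_pos_of_rpow_mul_rpow_pos
    (sub_ne_zero.mpr (inv_lt_one_of_one_lt₀ hα).ne') (inv_ne_zero (by positivity))
    (sum_nonneg fun i _ => hPnonneg i)
    (sum_nonneg fun i _ => mul_nonneg (rpow_nonneg (hQnonneg i) _) (rpow_nonneg (hPnonneg i) _))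
    (hQA.trans_le holder)
  rw [renyiDiv, if_pos hQP, elog, elog, if_neg hPA.ne', if_neg hQA.ne', ← EReal.coe_mul,
    ← EReal.coe_mul, ← EReal.coe_sub, ge_iff_le, EReal.coe_le_coe_iff]
  exact inv_sub_one_mul_log_sub_le_of_le_rpow_mul_rpow hα hQA hPA hZ holder

/-- The lower-bound form of the logarithmic probability comparison bound,
obtained by interchanging the roles of the two measures. -/
theorem lpcb_finite_lower {S : Type*} [Fintype S] (P Q : S → ℝ) (A : Finset S) (α : ℝ)
    (hα : 1 < α)
    (hPnonneg : ∀ i, 0 ≤ P i) (hPsum : ∑ i, P i = 1)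
    (hQnonneg : ∀ i, 0 ≤ Q i) (hQsum : ∑ i, Q i = 1) :
    ((1 / α : ℝ) : EReal) * elog (∑ i ∈ A, P i)
      ≥ ((1 / (α - 1) : ℝ) : EReal) * elog (∑ i ∈ A, Q i) - renyiDiv α Q P :=
  lpcb_finite_lower_general P Q A α hα hPnonneg hQnonneg
end

section
/- For each n ∈ ℕ let S_n be a finite set, let P_n and Q_n be probability distributions on S_n, and let A_n ⊆ S_n be an event. Fix α > 1 and define (as extended reals) E_*(P) = −limsup_{n→∞} (1/n)·ln P_n(A_n), E_*(Q) = −limsup_{n→∞} (1/n)·ln Q_n(A_n), and Δ_α = limsup_{n→∞} (1/n)·D_α(P_n‖Q_n). Then (1/(α−1))·E_*(P) ≥ (1/α)·E_*(Q) − Δ_α; equivalently, E_*(P) ≥ ((α−1)/α)·E_*(Q) − (α−1)·Δ_α. -/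
open scoped BigOperators

/-! For a single `n`, Hölder's inequality with weights `Q i` applied to the likelihood ratio
`P i / Q i` on the event `A` gives `P(A) ≤ Q(A) ^ (1 - 1/α) * (∑_{i ∈ A} P i ^ α Q i ^ (1 - α)) ^ (1/α)`,
hence `(1/(α-1)) ln P(A) - (1/α) ln Q(A) ≤ D_α(P‖Q)`. Dividing by `n` and using
`limsup x - limsup y ≤ limsup (x - y)` gives the asymptotic bound. The one-shot bound is kept in
subtracted form because in `EReal` it then survives `Q(A) = 0 < P(A)`, where `D_α = ⊤` but
`⊥ + ⊤ = ⊥` would break the form `(1/(α-1)) ln P(A) ≤ (1/α) ln Q(A) + D_α`. -/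

open Filter

lemma sum_le_sum_rpow_one_sub_inv_mul_sum_rpow_mul_rpow {ι : Type*} (s : Finset ι)
    {P Q : ι → ℝ} {α : ℝ} (hα : 1 ≤ α) (hP : ∀ i, 0 ≤ P i) (hQ : ∀ i, 0 ≤ Q i)
    (hPQ : ∀ i, Q i = 0 → P i = 0) :
    ∑ i ∈ s, P i ≤ (∑ i ∈ s, Q i) ^ (1 - α⁻¹) * (∑ i ∈ s, P i ^ α * Q i ^ (1 - α)) ^ α⁻¹ := by
  have hratio : ∀ i, Q i * (P i / Q i) = P i := fun i => by
    rcases eq_or_ne (Q i) 0 with h | h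
    · simp [h, hPQ i h]
    · field_simp
  have hratio_rpow : ∀ i, Q i * (P i / Q i) ^ α = P i ^ α * Q i ^ (1 - α) := fun i => by
    rcases eq_or_ne (Q i) 0 with h | h
    · simp [h, hPQ i h, Real.zero_rpow (by linarith : α ≠ 0)]
    · rw [Real.div_rpow (hP i) (hQ i), Real.rpow_sub ((hQ i).lt_of_ne' h), Real.rpow_one]
      field_simp
  simpa only [hratio, hratio_rpow] using
    Real.inner_le_weight_mul_Lp_of_nonneg s hα Q (fun i => P i / Q i) hQ
      fun i => div_nonneg (hP i) (hQ i)

lemma log_sum_sub_log_sum_le {S : Type*} [Fintype S] (A : Finset S) {P Q : S → ℝ} {α : ℝ}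
    (hα : 1 < α) (hP : ∀ i, 0 ≤ P i) (hQ : ∀ i, 0 ≤ Q i) (hPQ : ∀ i, Q i = 0 → P i = 0)
    (hPA : 0 < ∑ i ∈ A, P i) :
    1 / (α - 1) * Real.log (∑ i ∈ A, P i) - 1 / α * Real.log (∑ i ∈ A, Q i)
      ≤ 1 / (α * (α - 1)) * Real.log (∑ i, P i ^ α * Q i ^ (1 - α)) := by
  set p := ∑ i ∈ A, P i
  set q := ∑ i ∈ A, Q i
  set r := ∑ i ∈ A, P i ^ α * Q i ^ (1 - α)
  have hterm : ∀ i, 0 ≤ P i ^ α * Q i ^ (1 - α) := fun i => by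
    have := hP i; have := hQ i; positivity
  have hholder : p ≤ q ^ (1 - α⁻¹) * r ^ α⁻¹ :=
    sum_le_sum_rpow_one_sub_inv_mul_sum_rpow_mul_rpow A hα.le hP hQ hPQ
  have hq : 0 < q := (Finset.sum_nonneg fun i _ => hQ i).lt_of_ne' fun (hq0 : q = 0) => by
    rw [hq0, Real.zero_rpow (by have := inv_lt_one_of_one_lt₀ hα; linarith), zero_mul] at hholder
    linarith
  have hr : 0 < r := (Finset.sum_nonneg fun i _ => hterm i).lt_of_ne' fun (hr0 : r = 0) => by
    rw [hr0, Real.zero_rpow (by positivity), mul_zero] at hholder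
    linarith
  have hlog : Real.log p ≤ (1 - α⁻¹) * Real.log q + α⁻¹ * Real.log r := by
    have := Real.log_le_log hPA hholder
    rwa [Real.log_mul (by positivity) (by positivity), Real.log_rpow hq, Real.log_rpow hr] at this
  have hα1 : 0 < α - 1 := by linarith
  calc 1 / (α - 1) * Real.log p - 1 / α * Real.log q
      ≤ 1 / (α - 1) * ((1 - α⁻¹) * Real.log q + α⁻¹ * Real.log r) - 1 / α * Real.log q := by
        gcongr
    _ = 1 / (α * (α - 1)) * Real.log r := by
        field_simp
        ring
    _ ≤ 1 / (α * (α - 1)) * Real.log (∑ i, P i ^ α * Q i ^ (1 - α)) := by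
        gcongr
        exact Finset.sum_le_univ_sum_of_nonneg hterm

lemma mul_elog_sub_mul_elog_le_renyiDiv {S : Type*} [Fintype S] (A : Finset S) {P Q : S → ℝ}
    {α : ℝ} (hα : 1 < α) (hP : ∀ i, 0 ≤ P i) (hQ : ∀ i, 0 ≤ Q i) :
    ((1 / (α - 1) : ℝ) : EReal) * elog (∑ i ∈ A, P i) - ((1 / α : ℝ) : EReal) * elog (∑ i ∈ A, Q i)
      ≤ renyiDiv α P Q := by
  unfold renyiDiv
  split_ifs with hPQ
  swap
  · exact le_top
  rcases (Finset.sum_nonneg fun i _ => hP i : 0 ≤ ∑ i ∈ A, P i).eq_or_lt' with hPA | hPA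
  · rw [elog, if_pos hPA, EReal.coe_mul_bot_of_pos (one_div_pos.2 (sub_pos.2 hα)),
      EReal.bot_sub]
    exact bot_le
  have hQA : ∑ i ∈ A, Q i ≠ 0 := fun hQA => hPA.ne' <| Finset.sum_eq_zero fun i hi =>
    hPQ i ((Finset.sum_eq_zero_iff_of_nonneg fun j _ => hQ j).1 hQA i hi)
  rw [elog, if_neg hPA.ne', elog, if_neg hQA]
  exact_mod_cast log_sum_sub_log_sum_le A hα hP hQ hPQ hPA

lemma EReal.neg_sub_le_neg_of_sub_le {x y z : EReal} (h : x - y ≤ z) : -y - z ≤ -x := by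
  induction x <;> induction y <;> induction z <;> try simp_all
  · exact EReal.coe_ne_bot _ h
  · norm_cast at h ⊢
    linarith

lemma EReal.mul_limsup_sub_mul_limsup_le {ι : Type*} {f : Filter ι} [f.NeBot] {u v : ι → EReal}
    {a b : ℝ} (ha : 0 ≤ a) (hb : 0 ≤ b) :
    (a : EReal) * limsup u f - (b : EReal) * limsup v f
      ≤ limsup (fun x => (a : EReal) * u x - (b : EReal) * v x) f := by
  rw [← EReal.limsup_const_mul_of_nonneg_of_ne_top (by exact_mod_cast ha) (EReal.coe_ne_top a),
    ← EReal.limsup_const_mul_of_nonneg_of_ne_top (by exact_mod_cast hb) (EReal.coe_ne_top b),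
    sub_eq_add_neg, ← EReal.liminf_neg]
  exact EReal.le_limsup_add

theorem lpcb_exponential_rate_general (S : ℕ → Type*) [∀ n, Fintype (S n)]
    (P Q : ∀ n, S n → ℝ) (A : ∀ n, Finset (S n)) (α : ℝ)
    (hα : 1 < α)
    (hPnonneg : ∀ n i, 0 ≤ P n i)
    (hQnonneg : ∀ n i, 0 ≤ Q n i)
    (EP EQ Δ : EReal)
    (hEP : EP = - Filter.limsup
      (fun n : ℕ => ((1 / (n : ℝ) : ℝ) : EReal) * elog (∑ i ∈ A n, P n i)) Filter.atTop)
    (hEQ : EQ = - Filter.limsup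
      (fun n : ℕ => ((1 / (n : ℝ) : ℝ) : EReal) * elog (∑ i ∈ A n, Q n i)) Filter.atTop)
    (hΔ : Δ = Filter.limsup
      (fun n : ℕ => ((1 / (n : ℝ) : ℝ) : EReal) * renyiDiv α (P n) (Q n)) Filter.atTop) :
    ((1 / (α - 1) : ℝ) : EReal) * EP ≥ ((1 / α : ℝ) : EReal) * EQ - Δ := by
  have hrate : ∀ n : ℕ,
      ((1 / (α - 1) : ℝ) : EReal) * (((1 / (n : ℝ) : ℝ) : EReal) * elog (∑ i ∈ A n, P n i))
        - ((1 / α : ℝ) : EReal) * (((1 / (n : ℝ) : ℝ) : EReal) * elog (∑ i ∈ A n, Q n i))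
      ≤ ((1 / (n : ℝ) : ℝ) : EReal) * renyiDiv α (P n) (Q n) := fun n => by
    rw [mul_left_comm, mul_left_comm ((1 / α : ℝ) : EReal),
      ← EReal.mul_sub_of_nonneg_of_ne_top (by positivity) (EReal.coe_ne_top _)]
    exact mul_le_mul_of_nonneg_left
      (mul_elog_sub_mul_elog_le_renyiDiv (A n) hα (hPnonneg n) (hQnonneg n)) (by positivity)
  have hlimsup := (EReal.mul_limsup_sub_mul_limsup_le (f := atTop)
    (one_div_pos.2 (sub_pos.2 hα)).le (one_div_pos.2 (zero_lt_one.trans hα)).le).trans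
    (limsup_le_limsup (Eventually.of_forall hrate))
  rw [hEP, hEQ, hΔ, mul_neg, mul_neg]
  exact EReal.neg_sub_le_neg_of_sub_le hlimsup

/-- Asymptotic consequence of the LPCB: lower bound on the exponential decay rate
under `P` in terms of that under `Q` and the normalized Rényi divergence. -/
theorem lpcb_exponential_rate (S : ℕ → Type*) [∀ n, Fintype (S n)]
    (P Q : ∀ n, S n → ℝ) (A : ∀ n, Finset (S n)) (α : ℝ)
    (hα : 1 < α)
    (hPnonneg : ∀ n i, 0 ≤ P n i) (hPsum : ∀ n, ∑ i, P n i = 1)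
    (hQnonneg : ∀ n i, 0 ≤ Q n i) (hQsum : ∀ n, ∑ i, Q n i = 1)
    (EP EQ Δ : EReal)
    (hEP : EP = - Filter.limsup
      (fun n : ℕ => ((1 / (n : ℝ) : ℝ) : EReal) * elog (∑ i ∈ A n, P n i)) Filter.atTop)
    (hEQ : EQ = - Filter.limsup
      (fun n : ℕ => ((1 / (n : ℝ) : ℝ) : EReal) * elog (∑ i ∈ A n, Q n i)) Filter.atTop)
    (hΔ : Δ = Filter.limsup
      (fun n : ℕ => ((1 / (n : ℝ) : ℝ) : EReal) * renyiDiv α (P n) (Q n)) Filter.atTop) :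
    ((1 / (α - 1) : ℝ) : EReal) * EP ≥ ((1 / α : ℝ) : EReal) * EQ - Δ :=
  lpcb_exponential_rate_general S P Q A α hα hPnonneg hQnonneg EP EQ Δ hEP hEQ hΔ
end

section
/- Let Y be a finite set and let q be a probability distribution on Y with q(y) > 0 for all y. Fix α > 1. Then there exist constants C > 0 and η ∈ (0,1) such that for every function ε : Y → ℝ satisfying ∑_y q(y)ε(y) = 0 and ‖ε‖ := max_y |ε(y)| ≤ η, the function p(y) = q(y)(1+ε(y)) is a probability distribution on Y with full support, and D_α(q‖p) ≤ (1/2)·∑_y q(y)ε(y)² + C·‖ε‖³. -/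
/-!
The divergence is `log T / (α (α - 1))` with `T = ∑ q (1 + ε) ^ (1 - α)`. Expanding
`(1 + x) ^ (1 - α)` to second order with a cubic remainder, the linear term of `T` vanishes
because `∑ q ε = 0` and its quadratic term is `α (α - 1) / 2 · ∑ q ε²`; then `log T ≤ T - 1`.
-/

open scoped BigOperators

lemma abs_le_mul_abs_pow_succ_of_hasDerivAt {f f' : ℝ → ℝ} {C x : ℝ} {n : ℕ}
    (hC : 0 ≤ C) (h0 : f 0 = 0) (hf : ∀ u, |u| ≤ |x| → HasDerivAt f (f' u) u)
    (hf' : ∀ u, |u| ≤ |x| → |f' u| ≤ C * |u| ^ n) :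
    |f x| ≤ C * |x| ^ (n + 1) := by
  have hux : ∀ u ∈ Set.uIcc 0 x, |u| ≤ |x| := fun u hu => by
    simpa using Set.abs_sub_left_of_mem_uIcc hu
  have key := (convex_uIcc (0 : ℝ) x).norm_image_sub_le_of_norm_hasDerivWithin_le
    (C := C * |x| ^ n) (fun u hu => (hf u (hux u hu)).hasDerivWithinAt)
    (fun u hu => (hf' u (hux u hu)).trans
      (mul_le_mul_of_nonneg_left (pow_le_pow_left₀ (abs_nonneg u) (hux u hu) n) hC))
    Set.left_mem_uIcc Set.right_mem_uIcc
  simpa [h0, pow_succ, mul_assoc] using key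

lemma hasDerivAt_one_add_rpow (p : ℝ) {t : ℝ} (ht : 0 < 1 + t) :
    HasDerivAt (fun u : ℝ => (1 + u) ^ p) (p * (1 + t) ^ (p - 1)) t := by
  simpa [Function.comp_def] using
    (Real.hasDerivAt_rpow_const (p := p) (Or.inl ht.ne')).comp t ((hasDerivAt_id t).const_add 1)

/-- The constant bounds the third derivative `p (p - 1) (p - 2) (1 + u) ^ (p - 3)` on
`[-1/2, 1/2]`: for `p ≤ 3` it is largest in absolute value at `u = -1/2`. -/
lemma abs_one_add_rpow_sub_taylor_le {p x : ℝ} (hp : p ≤ 3) (hx : |x| ≤ 1 / 2) :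
    |(1 + x) ^ p - (1 + p * x + p * (p - 1) / 2 * x ^ 2)|
      ≤ |p * (p - 1) * (p - 2)| * 2 ^ (3 - p) * |x| ^ 3 := by
  set K := |p * (p - 1) * (p - 2)| * (2 : ℝ) ^ (3 - p)
  have hK : 0 ≤ K := by positivity
  have hpos : ∀ u : ℝ, |u| ≤ 1 / 2 → 0 < 1 + u := fun u hu => by
    linarith [neg_abs_le u]
  have third : ∀ t : ℝ, |t| ≤ 1 / 2 →
      |p * (p - 1) * ((1 + t) ^ (p - 2) - 1)| ≤ K * |t| ^ 1 := fun t ht =>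
    abs_le_mul_abs_pow_succ_of_hasDerivAt (n := 0) hK
      (f := fun u => p * (p - 1) * ((1 + u) ^ (p - 2) - 1))
      (f' := fun u => p * (p - 1) * (p - 2) * (1 + u) ^ (p - 3)) (by simp)
      (fun u hu => by
        refine (((hasDerivAt_one_add_rpow (p - 2) (hpos u (hu.trans ht))).sub_const 1).const_mul
          (p * (p - 1))).congr_deriv ?_
        rw [show p - 2 - 1 = p - 3 by ring]; ring)
      (fun u hu => by
        have hbound : (1 + u) ^ (p - 3) ≤ (2 : ℝ) ^ (3 - p) := by
          calc (1 + u) ^ (p - 3) ≤ (1 / 2 : ℝ) ^ (p - 3) :=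
                Real.rpow_le_rpow_of_nonpos (by norm_num) (by linarith [neg_abs_le u]) (by linarith)
            _ = 2 ^ (3 - p) := by
                rw [one_div, Real.inv_rpow (by norm_num), ← Real.rpow_neg (by norm_num), neg_sub]
        rw [abs_mul, abs_of_pos (Real.rpow_pos_of_pos (hpos u (hu.trans ht)) _), pow_zero,
          mul_one]
        exact mul_le_mul_of_nonneg_left hbound (abs_nonneg _))
  have second : ∀ t : ℝ, |t| ≤ 1 / 2 →
      |p * (1 + t) ^ (p - 1) - p - p * (p - 1) * t| ≤ K * |t| ^ 2 := fun t ht =>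
    abs_le_mul_abs_pow_succ_of_hasDerivAt hK
      (f := fun u => p * (1 + u) ^ (p - 1) - p - p * (p - 1) * u)
      (f' := fun u => p * (p - 1) * ((1 + u) ^ (p - 2) - 1)) (by simp)
      (fun u hu => by
        refine ((((hasDerivAt_one_add_rpow (p - 1) (hpos u (hu.trans ht))).const_mul p).sub_const
          p).sub ((hasDerivAt_id u).const_mul (p * (p - 1)))).congr_deriv ?_
        rw [show p - 1 - 1 = p - 2 by ring]; ring)
      (fun u hu => third u (hu.trans ht))
  exact abs_le_mul_abs_pow_succ_of_hasDerivAt hK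
    (f := fun u => (1 + u) ^ p - (1 + p * u + p * (p - 1) / 2 * u ^ 2))
    (f' := fun u => p * (1 + u) ^ (p - 1) - p - p * (p - 1) * u) (by simp)
    (fun u hu => by
      refine ((hasDerivAt_one_add_rpow p (hpos u (hu.trans hx))).sub
        ((((hasDerivAt_id u).const_mul p).const_add 1).add
          ((hasDerivAt_pow 2 u).const_mul (p * (p - 1) / 2)))).congr_deriv ?_
      norm_num; ring)
    (fun u hu => second u (hu.trans hx))

lemma sum_mul_one_add_rpow_le {ι : Type*} [Fintype ι] {q ε : ι → ℝ} {p M : ℝ} (hp : p ≤ 3)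
    (hq : ∀ i, 0 ≤ q i) (hqsum : ∑ i, q i = 1) (hmean : ∑ i, q i * ε i = 0)
    (hε : ∀ i, |ε i| ≤ M) (hM : M ≤ 1 / 2) :
    ∑ i, q i * (1 + ε i) ^ p ≤ 1 + p * (p - 1) / 2 * ∑ i, q i * ε i ^ 2
      + |p * (p - 1) * (p - 2)| * 2 ^ (3 - p) * M ^ 3 := by
  set K := |p * (p - 1) * (p - 2)| * (2 : ℝ) ^ (3 - p)
  have hterm : ∀ i,
      (1 + ε i) ^ p ≤ 1 + p * ε i + p * (p - 1) / 2 * ε i ^ 2 + K * M ^ 3 := by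
    intro i
    have htaylor := (abs_le.mp (abs_one_add_rpow_sub_taylor_le hp ((hε i).trans hM))).2
    have hcube : K * |ε i| ^ 3 ≤ K * M ^ 3 := by gcongr; exact hε i
    linarith
  calc ∑ i, q i * (1 + ε i) ^ p
      ≤ ∑ i, (q i + p * (q i * ε i) + p * (p - 1) / 2 * (q i * ε i ^ 2) + K * M ^ 3 * q i) :=
        Finset.sum_le_sum fun i _ => by linarith [mul_le_mul_of_nonneg_left (hterm i) (hq i)]
    _ = 1 + p * (p - 1) / 2 * ∑ i, q i * ε i ^ 2 + K * M ^ 3 := by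
        simp only [Finset.sum_add_distrib, ← Finset.mul_sum, hqsum, hmean]
        ring

lemma renyiDiv_mul_right {S : Type*} [Fintype S] (α : ℝ) {q r : S → ℝ} (hq : ∀ i, 0 < q i)
    (hr : ∀ i, 0 < r i) :
    renyiDiv α q (fun i => q i * r i)
      = ((1 / (α * (α - 1)) * Real.log (∑ i, q i * r i ^ (1 - α)) : ℝ) : EReal) := by
  rw [renyiDiv, if_pos fun i h => absurd h (mul_pos (hq i) (hr i)).ne']
  congr 4 with i
  rw [Real.mul_rpow (hq i).le (hr i).le, ← mul_assoc, ← Real.rpow_add (hq i), add_sub_cancel,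
    Real.rpow_one]

/-- Second moment bound on the Rényi divergence under a small perturbation of the
reference distribution. -/
theorem renyiDiv_second_moment_bound {Y : Type*} [Fintype Y] (q : Y → ℝ) (α : ℝ)
    (hα : 1 < α)
    (hqpos : ∀ y, 0 < q y) (hqsum : ∑ y, q y = 1) :
    ∃ C > (0 : ℝ), ∃ η ∈ Set.Ioo (0 : ℝ) 1,
      ∀ ε : Y → ℝ, (∑ y, q y * ε y = 0) → (⨆ y, |ε y|) ≤ η →
        (∀ y, 0 < q y * (1 + ε y)) ∧ (∑ y, q y * (1 + ε y) = 1) ∧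
        renyiDiv α q (fun y => q y * (1 + ε y))
          ≤ (((1 / 2) * ∑ y, q y * (ε y) ^ 2 + C * (⨆ y, |ε y|) ^ 3 : ℝ) : EReal) := by
  have hA : 0 < α * (α - 1) := mul_pos (by linarith) (by linarith)
  refine ⟨(α + 1) * 2 ^ (α + 2), by positivity, 1 / 2, by norm_num, fun ε hmean hsup => ?_⟩
  have hε : ∀ y, |ε y| ≤ ⨆ y, |ε y| := le_ciSup (Set.finite_range _).bddAbove
  have hpos : ∀ y, 0 < 1 + ε y := fun y => by linarith [neg_abs_le (ε y), hε y]
  refine ⟨fun y => mul_pos (hqpos y) (hpos y), ?_, ?_⟩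
  · simp only [mul_add, mul_one, Finset.sum_add_distrib, hqsum, hmean, add_zero]
  rw [renyiDiv_mul_right α hqpos hpos, EReal.coe_le_coe_iff]
  have hT := sum_mul_one_add_rpow_le (p := 1 - α) (by linarith) (fun y => (hqpos y).le) hqsum
    hmean hε hsup
  have hK : |(1 - α) * (1 - α - 1) * (1 - α - 2)| * (2 : ℝ) ^ (3 - (1 - α))
      = α * (α - 1) * ((α + 1) * 2 ^ (α + 2)) := by
    rw [show (1 - α) * (1 - α - 1) * (1 - α - 2) = -(α * (α - 1) * (α + 1)) by ring, abs_neg,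
      abs_of_pos (by positivity), show (3 : ℝ) - (1 - α) = α + 2 by ring]
    ring
  rw [hK] at hT
  obtain ⟨y₀, -⟩ := Finset.exists_ne_zero_of_sum_ne_zero (hqsum.trans_ne one_ne_zero)
  have hTpos : 0 < ∑ y, q y * (1 + ε y) ^ (1 - α) :=
    Finset.sum_pos (fun y _ => mul_pos (hqpos y) (Real.rpow_pos_of_pos (hpos y) _))
      ⟨y₀, Finset.mem_univ _⟩
  calc 1 / (α * (α - 1)) * Real.log (∑ y, q y * (1 + ε y) ^ (1 - α))
      ≤ 1 / (α * (α - 1)) * (∑ y, q y * (1 + ε y) ^ (1 - α) - 1) := by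
        gcongr; exact Real.log_le_sub_one_of_pos hTpos
    _ ≤ 1 / (α * (α - 1)) * (α * (α - 1) *
          (1 / 2 * ∑ y, q y * ε y ^ 2 + (α + 1) * 2 ^ (α + 2) * (⨆ y, |ε y|) ^ 3)) := by
        gcongr; linarith
    _ = _ := by rw [← mul_assoc, one_div_mul_cancel hA.ne', one_mul]
end

section
/- Let u > 0 and v > 0. Then the supremum over α ∈ [1,∞) of the function α ↦ ((α−1)/α)·u − (α−1)·v equals (√u − √v)² if u ≥ v, and equals 0 if u ≤ v. -/
/-!
For `u, v ≥ 0` the function equals `(√u - √v)² - (√u - α √v)² / α`, so it is bounded by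
`(√u - √v)²` and attains this value at `α = √u / √v`, which lies in `[1, ∞)` exactly when `v ≤ u`.
When `u ≤ v` it factors as `(α - 1)(u / α - v) ≤ 0`, with the value `0` taken at `α = 1`.
-/

open Set

noncomputable def tradeoff (u v α : ℝ) : ℝ := ((α - 1) / α) * u - (α - 1) * v

theorem tradeoff_eq_sq_sub_sqrt_sub {u v α : ℝ} (hu : 0 ≤ u) (hv : 0 ≤ v) (hα : α ≠ 0) :
    tradeoff u v α = (√u - √v) ^ 2 - (√u - α * √v) ^ 2 / α := by
  have h := Real.sq_sqrt hu
  have h' := Real.sq_sqrt hv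
  unfold tradeoff
  field_simp
  linear_combination (1 - α) * h + α * (α - 1) * h'

theorem tradeoff_le_sq_sub_sqrt {u v α : ℝ} (hu : 0 ≤ u) (hv : 0 ≤ v) (hα : 0 < α) :
    tradeoff u v α ≤ (√u - √v) ^ 2 := by
  rw [tradeoff_eq_sq_sub_sqrt_sub hu hv hα.ne']
  exact sub_le_self _ (by positivity)

theorem tradeoff_sqrt_div_sqrt {u v : ℝ} (hu : 0 < u) (hv : 0 < v) :
    tradeoff u v (√u / √v) = (√u - √v) ^ 2 := by
  have hsv : 0 < √v := Real.sqrt_pos.mpr hv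
  rw [tradeoff_eq_sq_sub_sqrt_sub hu.le hv.le (by positivity), div_mul_cancel₀ _ hsv.ne',
    sub_self]
  simp

theorem tradeoff_one (u v : ℝ) : tradeoff u v 1 = 0 := by
  simp [tradeoff]

theorem tradeoff_nonpos {u v α : ℝ} (hv : 0 ≤ v) (huv : u ≤ v) (hα : 1 ≤ α) :
    tradeoff u v α ≤ 0 := by
  have hα₀ : 0 < α := zero_lt_one.trans_le hα
  have hfactor : tradeoff u v α = (α - 1) * (u / α - v) := by
    unfold tradeoff
    ring
  have hquot : u / α ≤ v := by
    rw [div_le_iff₀ hα₀]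
    nlinarith
  rw [hfactor]
  exact mul_nonpos_of_nonneg_of_nonpos (sub_nonneg.mpr hα) (sub_nonpos.mpr hquot)

theorem isGreatest_tradeoff_sq_sub_sqrt {u v : ℝ} (hv : 0 < v) (hvu : v ≤ u) :
    IsGreatest (tradeoff u v '' Ici 1) ((√u - √v) ^ 2) := by
  have hu : 0 < u := hv.trans_le hvu
  refine ⟨⟨√u / √v, ?_, tradeoff_sqrt_div_sqrt hu hv⟩, ?_⟩
  · exact (one_le_div (Real.sqrt_pos.mpr hv)).mpr (Real.sqrt_le_sqrt hvu)
  · rintro _ ⟨α, hα, rfl⟩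
    exact tradeoff_le_sq_sub_sqrt hu.le hv.le (zero_lt_one.trans_le hα)

theorem isGreatest_tradeoff_zero {u v : ℝ} (hv : 0 ≤ v) (huv : u ≤ v) :
    IsGreatest (tradeoff u v '' Ici 1) 0 := by
  refine ⟨⟨1, self_mem_Ici, tradeoff_one u v⟩, ?_⟩
  rintro _ ⟨α, hα, rfl⟩
  exact tradeoff_nonpos hv huv hα

theorem sup_alpha_tradeoff_general (u v : ℝ) (hv : 0 < v) :
    (v ≤ u → sSup ((fun α : ℝ => ((α - 1) / α) * u - (α - 1) * v) '' Set.Ici (1 : ℝ))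
        = (Real.sqrt u - Real.sqrt v) ^ 2) ∧
    (u ≤ v → sSup ((fun α : ℝ => ((α - 1) / α) * u - (α - 1) * v) '' Set.Ici (1 : ℝ))
        = 0) :=
  ⟨fun hvu => (isGreatest_tradeoff_sq_sub_sqrt hv hvu).csSup_eq,
    fun huv => (isGreatest_tradeoff_zero hv.le huv).csSup_eq⟩

/-- The supremum over `α ∈ [1,∞)` of `((α-1)/α)·u - (α-1)·v` equals `(√u - √v)²`
when `u ≥ v`, and equals `0` when `u ≤ v`. -/
theorem sup_alpha_tradeoff (u v : ℝ) (hu : 0 < u) (hv : 0 < v) :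
    (v ≤ u → sSup ((fun α : ℝ => ((α - 1) / α) * u - (α - 1) * v) '' Set.Ici (1 : ℝ))
        = (Real.sqrt u - Real.sqrt v) ^ 2) ∧
    (u ≤ v → sSup ((fun α : ℝ => ((α - 1) / α) * u - (α - 1) * v) '' Set.Ici (1 : ℝ))
        = 0) :=
  sup_alpha_tradeoff_general u v hv
end

section
/- Let n ≥ 1, σ > 0, s > 0, Γ > 0, and let α > 1 satisfy s > 1 − 1/α. Let C ⊂ ℝⁿ be a nonempty finite set (the codebook) and Π the uniform distribution on C. For t = 1,…,n let g_t : ℝⁿ × ℝ^{t−1} → ℝ be Borel measurable with sup |g_t| ≤ Γ_t, where ∑_{t=1}^{n} Γ_t² ≤ nΓ². Define the conditional densities on ℝⁿ: p(y|x) = (2πσ²)^{−n/2}·exp(−(1/(2σ²))·∑_{t=1}^{n}(y_t − x_t − g_t(x, y^{t−1}))²) and q(y|x) = (2πσ²/s)^{−n/2}·exp(−(s/(2σ²))·∑_{t=1}^{n}(y_t − x_t)²). Then D_α(Q_n‖P_n) := (1/(α(α−1)))·ln( ∑_{x∈C} Π(x)·∫_{ℝⁿ} q(y|x)^{α} p(y|x)^{1−α}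 dy ) satisfies D_α(Q_n‖P_n) ≤ n·ln s/(2(α−1)) − n·ln(1+α(s−1))/(2α(α−1)) + n·s·Γ²/(2σ²·(1+α(s−1))). -/
/-!
The density ratio factorizes over the time steps: `q(y|x)^α p(y|x)^(1-α)` is a product of
one-dimensional factors whose `t`-th factor depends on `y` only through `y_1, …, y_t`, since the
interference `g_t` only sees the past. Integrating out `y_n, y_(n-1), …, y_1` in turn, each factor,
with the past frozen, integrates to the Rényi integral `∫ N(a, σ²/s)^α N(a + G, σ²)^(1-α)` of two
normal densities whose means differ by `G = g_t`. Completing the square evaluates it; as `α > 1`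
it increases with `G²`, so `|g_t| ≤ Γ_t` bounds it independently of the codeword, and the bound on
the average over the codebook follows.
-/

open MeasureTheory Finset Function Real
open scoped ENNReal

section Adapted

variable {ι : Type*} [Fintype ι] [LinearOrder ι] {X : ι → Type*} [∀ i, MeasurableSpace (X i)]
  (μ : ∀ i, Measure (X i)) [∀ i, SigmaFinite (μ i)]
  {φ : ι → (∀ i, X i) → ℝ≥0∞} {B : ι → ℝ≥0∞}

lemma lmarginal_prod_le_of_adapted (hφ : ∀ t, Measurable (φ t))
    (hadapted : ∀ t y y', (∀ u ≤ t, y u = y' u) → φ t y = φ t y')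
    (hB : ∀ t y, ∫⁻ c, φ t (update y t c) ∂μ t ≤ B t) {s : Finset ι}
    (hs : IsUpperSet (s : Set ι)) (y : ∀ i, X i) :
    (∫⋯∫⁻_s, (fun y ↦ ∏ t, φ t y) ∂μ) y ≤ (∏ t ∈ sᶜ, φ t y) * ∏ t ∈ s, B t := by
  induction s using Finset.induction_on_min generalizing y with
  | empty => simp
  | insert a s ha ih =>
    have ha_notMem : a ∉ s := fun h ↦ lt_irrefl a (ha a h)
    have hs' : IsUpperSet (s : Set ι) := fun t u htu ht ↦
      (mem_insert.mp (hs htu (mem_insert_of_mem ht))).resolve_left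
        fun hua ↦ (ha t ht).not_ge (hua ▸ htu)
    have hcompl : sᶜ = insert a (insert a s)ᶜ := by
      ext t; by_cases hta : t = a <;> simp [hta, ha_notMem]
    have hpast (c : X a) : ∀ t ∈ (insert a s)ᶜ, φ t (update y a c) = φ t y := by
      intro t ht
      have hta : t < a := lt_of_not_ge fun hat ↦
        (mem_compl.mp ht) (hs hat (mem_insert_self a s))
      exact hadapted t _ _ fun u hut ↦ update_of_ne (hut.trans_lt hta).ne c y
    have hφa : Measurable fun c ↦ φ a (update y a c) := (hφ a).comp (measurable_update y)
    rw [lmarginal_insert _ (measurable_prod _ fun t _ ↦ hφ t) ha_notMem]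
    calc ∫⁻ c, (∫⋯∫⁻_s, (fun y ↦ ∏ t, φ t y) ∂μ) (update y a c) ∂μ a
        ≤ ∫⁻ c, (∏ t ∈ (insert a s)ᶜ, φ t y) * φ a (update y a c) * ∏ t ∈ s, B t ∂μ a := by
          refine lintegral_mono fun c ↦ (ih hs' _).trans_eq ?_
          rw [hcompl, prod_insert (by simp), prod_congr rfl (hpast c)]
          ring
      _ = (∏ t ∈ (insert a s)ᶜ, φ t y) * (∫⁻ c, φ a (update y a c) ∂μ a) * ∏ t ∈ s, B t := by
          rw [lintegral_mul_const _ (hφa.const_mul _), lintegral_const_mul _ hφa]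
      _ ≤ (∏ t ∈ (insert a s)ᶜ, φ t y) * B a * ∏ t ∈ s, B t := by gcongr; exact hB a y
      _ = (∏ t ∈ (insert a s)ᶜ, φ t y) * ∏ t ∈ insert a s, B t := by
          rw [prod_insert ha_notMem]; ring

theorem lintegral_prod_le_prod_of_adapted (hφ : ∀ t, Measurable (φ t))
    (hadapted : ∀ t y y', (∀ u ≤ t, y u = y' u) → φ t y = φ t y')
    (hB : ∀ t y, ∫⁻ c, φ t (update y t c) ∂μ t ≤ B t) :
    ∫⁻ y, ∏ t, φ t y ∂Measure.pi μ ≤ ∏ t, B t := by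
  rcases isEmpty_or_nonempty (∀ i, X i) with hX | ⟨⟨y⟩⟩
  · simp [Measure.eq_zero_of_isEmpty (Measure.pi μ)]
  · simpa using lmarginal_prod_le_of_adapted μ hφ hadapted hB (s := univ)
      (by simpa using isUpperSet_univ) y

end Adapted

lemma lintegral_exp_neg_mul_sq_sub {b : ℝ} (hb : 0 < b) (m : ℝ) :
    ∫⁻ c, ENNReal.ofReal (exp (-b * (c - m) ^ 2)) = ENNReal.ofReal √(π / b) := by
  rw [← ofReal_integral_eq_lintegral_ofReal ((integrable_exp_neg_mul_sq hb).comp_sub_right m)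
    (.of_forall fun c ↦ (exp_pos _).le), integral_sub_right_eq_self (fun c ↦ exp (-b * c ^ 2)) m,
    integral_gaussian]

lemma mul_sq_add_mul_sub_sq {a b : ℝ} (hab : a + b ≠ 0) (u G : ℝ) :
    a * u ^ 2 + b * (u - G) ^ 2
      = (a + b) * (u - b * G / (a + b)) ^ 2 + a * b * G ^ 2 / (a + b) := by
  field_simp
  ring

/-- `N(a, σ²/s)(c) ^ α * N(a + G, σ²)(c) ^ (1 - α)` for the normal densities `N(m, v)`,
written through its logarithm. -/
noncomputable def gaussianRenyiFactor (σ s α a G c : ℝ) : ℝ :=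
  exp (-(α * log (2 * π * σ ^ 2 / s) + (1 - α) * log (2 * π * σ ^ 2)) / 2
    - (α * s * (c - a) ^ 2 + (1 - α) * (c - a - G) ^ 2) / (2 * σ ^ 2))

noncomputable def gaussianRenyiExponent (σ s α G : ℝ) : ℝ :=
  (α * log s - log (1 + α * (s - 1))) / 2
    + α * s * (α - 1) * G ^ 2 / (2 * σ ^ 2 * (1 + α * (s - 1)))

section GaussianRenyi

variable {σ s α : ℝ}

lemma gaussianRenyiFactor_pos (a G c : ℝ) : 0 < gaussianRenyiFactor σ s α a G c := exp_pos _

lemma lintegral_gaussianRenyiFactor (hσ : σ ≠ 0) (hs : 0 < s) (hA : 0 < 1 + α * (s - 1))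
    (a G : ℝ) :
    ∫⁻ c, ENNReal.ofReal (gaussianRenyiFactor σ s α a G c)
      = ENNReal.ofReal (exp (gaussianRenyiExponent σ s α G)) := by
  have hb : 0 < (1 + α * (s - 1)) / (2 * σ ^ 2) := by positivity
  have h2πσ : 0 < 2 * π * σ ^ 2 := by positivity
  have hsqrt : log √(π / ((1 + α * (s - 1)) / (2 * σ ^ 2)))
      = (log (2 * π * σ ^ 2) - log (1 + α * (s - 1))) / 2 := by
    rw [log_sqrt (by positivity), ← log_div h2πσ.ne' hA.ne']
    congr 2
    field_simp
  have hfactor : ∀ c, gaussianRenyiFactor σ s α a G c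
      = exp (gaussianRenyiExponent σ s α G - log √(π / ((1 + α * (s - 1)) / (2 * σ ^ 2))))
        * exp (-((1 + α * (s - 1)) / (2 * σ ^ 2))
          * (c - (a + (1 - α) * G / (1 + α * (s - 1)))) ^ 2) := by
    intro c
    have hsq := mul_sq_add_mul_sub_sq (a := α * s) (b := 1 - α) (by linarith) (c - a) G
    rw [show α * s + (1 - α) = 1 + α * (s - 1) by ring] at hsq
    rw [gaussianRenyiFactor, gaussianRenyiExponent, ← exp_add, hsqrt, log_div h2πσ.ne' hs.ne', hsq]
    congr 1
    field_simp
    ring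
  simp_rw [hfactor, ENNReal.ofReal_mul (exp_pos _).le]
  rw [lintegral_const_mul' _ _ ENNReal.ofReal_ne_top, lintegral_exp_neg_mul_sq_sub hb,
    ← ENNReal.ofReal_mul (exp_pos _).le, exp_sub, exp_log (sqrt_pos.mpr (by positivity)),
    div_mul_cancel₀ _ (sqrt_pos.mpr (by positivity)).ne']

lemma gaussianRenyiExponent_le_of_abs_le (hα : 1 ≤ α) (hs : 0 ≤ s) (hA : 0 < 1 + α * (s - 1))
    {G Γ : ℝ} (h : |G| ≤ Γ) : gaussianRenyiExponent σ s α G ≤ gaussianRenyiExponent σ s α Γ := by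
  have hG : G ^ 2 ≤ Γ ^ 2 := by
    rw [← sq_abs]
    exact pow_le_pow_left₀ (abs_nonneg G) h 2
  have hα1 : 0 ≤ α - 1 := by linarith
  unfold gaussianRenyiExponent
  gcongr

lemma gaussianRenyiExponent_nonneg (hα : 1 ≤ α) (hs : 0 < s) (hA : 0 < 1 + α * (s - 1))
    (G : ℝ) : 0 ≤ gaussianRenyiExponent σ s α G := by
  have hbernoulli : 1 + α * (s - 1) ≤ s ^ α := by
    simpa using one_add_mul_self_le_rpow_one_add (by linarith : -1 ≤ s - 1) hα
  have hlog : log (1 + α * (s - 1)) ≤ α * log s := by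
    rw [← log_rpow hs]
    exact log_le_log hA hbernoulli
  have hα1 : 0 ≤ α - 1 := by linarith
  unfold gaussianRenyiExponent
  have : 0 ≤ α * s * (α - 1) * G ^ 2 / (2 * σ ^ 2 * (1 + α * (s - 1))) := by positivity
  linarith

lemma gaussian_rpow_mul_rpow_eq_prod {n : ℕ} (hσ : σ ≠ 0) (hs : 0 < s) (x y w : Fin n → ℝ) :
    ((2 * π * σ ^ 2 / s) ^ (-(n : ℝ) / 2) * exp (-(s / (2 * σ ^ 2)) * ∑ t, (y t - x t) ^ 2)) ^ α
      * ((2 * π * σ ^ 2) ^ (-(n : ℝ) / 2)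
        * exp (-(1 / (2 * σ ^ 2)) * ∑ t, (y t - x t - w t) ^ 2)) ^ (1 - α)
      = ∏ t, gaussianRenyiFactor σ s α (x t) (w t) (y t) := by
  have hexp {a : ℝ} (ha : 0 < a) (u : ℝ) :
      a ^ (-(n : ℝ) / 2) * exp u = exp (log a * (-(n : ℝ) / 2) + u) := by
    rw [rpow_def_of_pos ha, exp_add]
  rw [hexp (by positivity), hexp (by positivity), ← exp_mul, ← exp_mul, ← exp_add]
  simp only [gaussianRenyiFactor]
  rw [← exp_sum]
  congr 1
  rw [log_div (by positivity) hs.ne', sum_sub_distrib, sum_const, ← sum_div, sum_add_distrib,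
    ← mul_sum, ← mul_sum, card_univ, Fintype.card_fin, nsmul_eq_mul]
  field_simp
  ring

lemma integral_prod_gaussianRenyiFactor_le {n : ℕ} (hσ : σ ≠ 0) (hs : 0 < s) (hα : 1 ≤ α)
    (hA : 0 < 1 + α * (s - 1)) (x : Fin n → ℝ) {w : Fin n → (Fin n → ℝ) → ℝ} {Γ : Fin n → ℝ}
    (hw : ∀ t, Measurable (w t)) (hadapted : ∀ t y y', (∀ u < t, y u = y' u) → w t y = w t y')
    (hbd : ∀ t y, |w t y| ≤ Γ t) :
    ∫ y, ∏ t, gaussianRenyiFactor σ s α (x t) (w t y) (y t)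
      ≤ exp (∑ t, gaussianRenyiExponent σ s α (Γ t)) := by
  have hmeas (t : Fin n) :
      Measurable fun y ↦ gaussianRenyiFactor σ s α (x t) (w t y) (y t) := by
    have := hw t
    unfold gaussianRenyiFactor
    fun_prop
  have hφ : ∫⁻ y, ∏ t, ENNReal.ofReal (gaussianRenyiFactor σ s α (x t) (w t y) (y t))
      ≤ ∏ t, ENNReal.ofReal (exp (gaussianRenyiExponent σ s α (Γ t))) := by
    refine lintegral_prod_le_prod_of_adapted (fun _ ↦ volume)
      (fun t ↦ ENNReal.measurable_ofReal.comp (hmeas t)) ?_ fun t y ↦ ?_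
    · intro t y y' hyy'
      rw [hadapted t y y' fun u hu ↦ hyy' u hu.le, hyy' t le_rfl]
    · have hwt (c : ℝ) : w t (update y t c) = w t y :=
        hadapted t _ _ fun u hu ↦ update_of_ne hu.ne c y
      simp only [hwt, update_self]
      rw [lintegral_gaussianRenyiFactor hσ hs hA]
      gcongr
      exact gaussianRenyiExponent_le_of_abs_le hα hs.le hA (hbd t y)
  calc ∫ y, ∏ t, gaussianRenyiFactor σ s α (x t) (w t y) (y t)
      = (∫⁻ y, ∏ t, ENNReal.ofReal (gaussianRenyiFactor σ s α (x t) (w t y) (y t))).toReal := by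
        rw [integral_eq_lintegral_of_nonneg_ae
          (.of_forall fun y ↦ prod_nonneg fun t _ ↦ (gaussianRenyiFactor_pos _ _ _).le)
          (measurable_prod _ fun t _ ↦ hmeas t).aestronglyMeasurable]
        simp_rw [ENNReal.ofReal_prod_of_nonneg fun t _ ↦ (gaussianRenyiFactor_pos _ _ _).le]
    _ ≤ (∏ t, ENNReal.ofReal (exp (gaussianRenyiExponent σ s α (Γ t)))).toReal :=
        ENNReal.toReal_mono (ENNReal.prod_ne_top fun _ _ ↦ ENNReal.ofReal_ne_top) hφ
    _ = exp (∑ t, gaussianRenyiExponent σ s α (Γ t)) := by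
        rw [← ENNReal.ofReal_prod_of_nonneg fun t _ ↦ (exp_pos _).le, ← exp_sum,
          ENNReal.toReal_ofReal (exp_pos _).le]

lemma one_div_mul_sum_gaussianRenyiExponent_le {n : ℕ} (hα : 1 < α) (hs : 0 ≤ s)
    (hA : 0 < 1 + α * (s - 1)) {Γt : Fin n → ℝ} {Γ : ℝ}
    (hΓsum : ∑ t, Γt t ^ 2 ≤ n * Γ ^ 2) :
    1 / (α * (α - 1)) * ∑ t, gaussianRenyiExponent σ s α (Γt t)
      ≤ n * log s / (2 * (α - 1)) - n * log (1 + α * (s - 1)) / (2 * α * (α - 1))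
        + n * s * Γ ^ 2 / (2 * σ ^ 2 * (1 + α * (s - 1))) := by
  have hα0 : α ≠ 0 := by positivity
  have hα1 : α - 1 ≠ 0 := sub_ne_zero.mpr hα.ne'
  calc 1 / (α * (α - 1)) * ∑ t, gaussianRenyiExponent σ s α (Γt t)
      = n * log s / (2 * (α - 1)) - n * log (1 + α * (s - 1)) / (2 * α * (α - 1))
        + s * (∑ t, Γt t ^ 2) / (2 * σ ^ 2 * (1 + α * (s - 1))) := by
        simp only [gaussianRenyiExponent, sum_add_distrib, sum_const, card_univ,
          Fintype.card_fin, nsmul_eq_mul, ← sum_div, ← mul_sum]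
        field_simp
    _ ≤ n * log s / (2 * (α - 1)) - n * log (1 + α * (s - 1)) / (2 * α * (α - 1))
        + s * (n * Γ ^ 2) / (2 * σ ^ 2 * (1 + α * (s - 1))) := by gcongr
    _ = _ := by ring

end GaussianRenyi

lemma log_sum_one_div_card_mul_le {ι : Type*} (C : Finset ι) {f : ι → ℝ} {M : ℝ} (hM : 0 ≤ M)
    (hf0 : ∀ x ∈ C, 0 ≤ f x) (hf : ∀ x ∈ C, f x ≤ exp M) :
    log (∑ x ∈ C, 1 / (#C : ℝ) * f x) ≤ M := by
  have hS0 : 0 ≤ ∑ x ∈ C, 1 / (#C : ℝ) * f x :=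
    sum_nonneg fun x hx ↦ mul_nonneg (by positivity) (hf0 x hx)
  rcases hS0.eq_or_lt with hS | hS
  · rwa [← hS, log_zero]
  refine (log_le_iff_le_exp hS).mpr ?_
  calc ∑ x ∈ C, 1 / (#C : ℝ) * f x
      ≤ ∑ x ∈ C, 1 / (#C : ℝ) * exp M :=
        sum_le_sum fun x hx ↦ mul_le_mul_of_nonneg_left (hf x hx) (by positivity)
    _ = (#C / #C : ℝ) * exp M := by rw [sum_const, nsmul_eq_mul]; ring
    _ ≤ exp M := mul_le_of_le_one_left (exp_pos _).le (div_self_le_one _)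

theorem renyiDiv_interference_channel_bound_general
    (n : ℕ) (σ s Γ α : ℝ)
    (hσ : 0 < σ) (hs : 0 < s) (hα : 1 < α) (hsα : 1 - 1 / α < s)
    (C : Finset (Fin n → ℝ))
    (g : Fin n → (Fin n → ℝ) → (Fin n → ℝ) → ℝ)
    (hgmeas : ∀ t, Measurable (fun z : (Fin n → ℝ) × (Fin n → ℝ) => g t z.1 z.2))
    (hgpast : ∀ t (x : Fin n → ℝ) (y y' : Fin n → ℝ),
      (∀ u : Fin n, u < t → y u = y' u) → g t x y = g t x y')
    (Γt : Fin n → ℝ)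
    (hgbd : ∀ t x y, |g t x y| ≤ Γt t)
    (hΓsum : ∑ t, (Γt t) ^ 2 ≤ (n : ℝ) * Γ ^ 2)
    (p q : (Fin n → ℝ) → (Fin n → ℝ) → ℝ)
    (hp : ∀ y x, p y x = (2 * Real.pi * σ ^ 2) ^ (-(n : ℝ) / 2)
      * Real.exp (-(1 / (2 * σ ^ 2)) * ∑ t, (y t - x t - g t x y) ^ 2))
    (hq : ∀ y x, q y x = (2 * Real.pi * σ ^ 2 / s) ^ (-(n : ℝ) / 2)
      * Real.exp (-(s / (2 * σ ^ 2)) * ∑ t, (y t - x t) ^ 2)) :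
    (1 / (α * (α - 1))) * Real.log
        (∑ x ∈ C, (1 / (C.card : ℝ)) * ∫ y : Fin n → ℝ, (q y x) ^ α * (p y x) ^ (1 - α))
      ≤ (n : ℝ) * Real.log s / (2 * (α - 1))
        - (n : ℝ) * Real.log (1 + α * (s - 1)) / (2 * α * (α - 1))
        + (n : ℝ) * s * Γ ^ 2 / (2 * σ ^ 2 * (1 + α * (s - 1))) := by
  have hα0 : 0 < α := by linarith
  have hA : 0 < 1 + α * (s - 1) := by
    have := mul_lt_mul_of_pos_left hsα hα0
    rw [mul_sub, mul_one_div_cancel hα0.ne'] at this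
    linarith
  have hI (x : Fin n → ℝ) :
      ∫ y, q y x ^ α * p y x ^ (1 - α) ≤ exp (∑ t, gaussianRenyiExponent σ s α (Γt t)) := by
    simp_rw [hq, hp, gaussian_rpow_mul_rpow_eq_prod hσ.ne' hs]
    exact integral_prod_gaussianRenyiFactor_le hσ.ne' hs hα.le hA x
      (fun t ↦ (hgmeas t).comp measurable_prodMk_left) (hgpast · x) (hgbd · x)
  calc _ ≤ 1 / (α * (α - 1)) * ∑ t, gaussianRenyiExponent σ s α (Γt t) := by
        gcongr
        refine log_sum_one_div_card_mul_le C
          (sum_nonneg fun t _ ↦ gaussianRenyiExponent_nonneg hα.le hs hA _)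
          (fun x _ ↦ integral_nonneg fun y ↦ ?_) fun x _ ↦ hI x
        rw [hq, hp]
        positivity
    _ ≤ _ := one_div_mul_sum_gaussianRenyiExponent_le hα hs.le hA hΓsum

/-- Bound on the Rényi divergence of the memoryless Gaussian reference channel `Q_n`
(noise variance `σ²/s`) from the Gaussian channel `P_n` with bounded additive
interference `g_t` (Theorem 3.1 of the paper, divergence estimate). -/
theorem renyiDiv_interference_channel_bound
    (n : ℕ) (hn : 1 ≤ n) (σ s Γ α : ℝ)
    (hσ : 0 < σ) (hs : 0 < s) (hΓ : 0 < Γ) (hα : 1 < α) (hsα : 1 - 1 / α < s)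
    (C : Finset (Fin n → ℝ)) (hC : C.Nonempty)
    (g : Fin n → (Fin n → ℝ) → (Fin n → ℝ) → ℝ)
    (hgmeas : ∀ t, Measurable (fun z : (Fin n → ℝ) × (Fin n → ℝ) => g t z.1 z.2))
    (hgpast : ∀ t (x : Fin n → ℝ) (y y' : Fin n → ℝ),
      (∀ u : Fin n, u < t → y u = y' u) → g t x y = g t x y')
    (Γt : Fin n → ℝ)
    (hgbd : ∀ t x y, |g t x y| ≤ Γt t)
    (hΓsum : ∑ t, (Γt t) ^ 2 ≤ (n : ℝ) * Γ ^ 2)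
    (p q : (Fin n → ℝ) → (Fin n → ℝ) → ℝ)
    (hp : ∀ y x, p y x = (2 * Real.pi * σ ^ 2) ^ (-(n : ℝ) / 2)
      * Real.exp (-(1 / (2 * σ ^ 2)) * ∑ t, (y t - x t - g t x y) ^ 2))
    (hq : ∀ y x, q y x = (2 * Real.pi * σ ^ 2 / s) ^ (-(n : ℝ) / 2)
      * Real.exp (-(s / (2 * σ ^ 2)) * ∑ t, (y t - x t) ^ 2)) :
    (1 / (α * (α - 1))) * Real.log
        (∑ x ∈ C, (1 / (C.card : ℝ)) * ∫ y : Fin n → ℝ, (q y x) ^ α * (p y x) ^ (1 - α))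
      ≤ (n : ℝ) * Real.log s / (2 * (α - 1))
        - (n : ℝ) * Real.log (1 + α * (s - 1)) / (2 * α * (α - 1))
        + (n : ℝ) * s * Γ ^ 2 / (2 * σ ^ 2 * (1 + α * (s - 1))) :=
  renyiDiv_interference_channel_bound_general n σ s Γ α hσ hs hα hsα C g hgmeas hgpast Γt hgbd hΓsum
    p q hp hq
end

section
/- Let n ≥ 1, p ∈ (0,1), and α > 1. On a finite probability space under a measure P, let X = (X_1,…,X_n), a = (a_1,…,a_n) and N = (N_1,…,N_n) be {0,1}-valued random vectors such that N_1,…,N_n are i.i.d. Bernoulli(p) and N is independent of the pair (X,a). Set Y_t = (a_t X_t) ⊕ N_t (addition modulo 2). Let Q be the measure under which the triple (X, a, Ñ) has the same joint law as (X, a, N) under P and the output is Y_t = X_t ⊕ Ñ_t. Let P_n and Q_n denote the laws of the triple (X, Y, a) under P and Q respectively. Then D_α(Q_n‖P_n) ≤ (1/(α(α−1)))·ln E_P[ δ(α)^{∑_{t=1}^{n}(1−a_t)} ], where δ(α) = p·((1−p)/p)^{α} + (1−p)·(p/(1−p))^{α}. -/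
open MeasureTheory ProbabilityTheory
open scoped BigOperators

/-!
Both laws factor through the common law of the input `(X, a)`. The output is determined by the
noise, which is independent of the input, so given the input `(x, a)` the output `y` has
probability `∏ₜ w(yₜ ⊕ aₜxₜ)` under `Pₙ` and `∏ₜ w(yₜ ⊕ xₜ)` under `Qₙ`, where `w` is the
Bernoulli(`p`) weight. The Rényi sum `∑ Qₙ^α Pₙ^(1-α)` is therefore the average over the input
of `∏ₜ ∑_b w(b ⊕ xₜ)^α w(b ⊕ aₜxₜ)^(1-α)`, whose factors are `1` if `aₜxₜ = xₜ` and `δ(α)`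
otherwise. Finally `δ(α) ≥ 1` by Jensen for `u ↦ u^α` at the points `(1-p)/p`, `p/(1-p)` with
weights `p`, `1-p`, whose mean is `1`, so the product is at most `δ(α)` to the number of erasures.
-/

open Classical in
/-- Rényi divergence of order `α` between two measures on a finite type,
with the `1/(α(α-1))` normalization; `+∞` if the support condition fails. -/
noncomputable def renyiDivMeas {S : Type*} [Fintype S] [MeasurableSpace S]
    (α : ℝ) (μ ν : Measure S) : EReal :=
  if ∀ i : S, ν {i} = 0 → μ {i} = 0 then
    (((1 / (α * (α - 1))) * Real.log
      (∑ i : S, (μ {i}).toReal ^ α * (ν {i}).toReal ^ (1 - α)) : ℝ) : EReal)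
  else ⊤

noncomputable def bernoulliWeight (p : ℝ) (b : Bool) : ℝ := if b then p else 1 - p

noncomputable def renyiDelta (p α : ℝ) : ℝ :=
  p * ((1 - p) / p) ^ α + (1 - p) * (p / (1 - p)) ^ α

lemma rpow_mul_rpow_one_sub {u : ℝ} (hu : 0 ≤ u) (α : ℝ) : u ^ α * u ^ (1 - α) = u := by
  rw [← Real.rpow_add' hu (by norm_num), add_sub_cancel, Real.rpow_one]

lemma mul_rpow_mul_mul_rpow_one_sub {m k l : ℝ} (hm : 0 ≤ m) (hk : 0 ≤ k) (hl : 0 ≤ l)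
    (α : ℝ) : (m * k) ^ α * (m * l) ^ (1 - α) = m * (k ^ α * l ^ (1 - α)) := by
  rw [Real.mul_rpow hm hk, Real.mul_rpow hm hl, mul_mul_mul_comm, rpow_mul_rpow_one_sub hm]

lemma sum_prod_rpow_mul_prod_rpow {ι β : Type*} [Fintype ι] [DecidableEq ι] [Fintype β]
    {f g : ι → β → ℝ} (hf : ∀ t b, 0 ≤ f t b) (hg : ∀ t b, 0 ≤ g t b) (α : ℝ) :
    ∑ y : ι → β, (∏ t, f t (y t)) ^ α * (∏ t, g t (y t)) ^ (1 - α)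
      = ∏ t, ∑ b, f t b ^ α * g t b ^ (1 - α) := by
  simp_rw [← Real.finsetProd_rpow _ _ fun t _ => hf t _,
    ← Real.finsetProd_rpow _ _ fun t _ => hg t _, ← Finset.prod_mul_distrib]
  exact (Fintype.prod_sum fun t b => f t b ^ α * g t b ^ (1 - α)).symm

section Bernoulli

variable {p : ℝ}

lemma bernoulliWeight_pos (hp0 : 0 < p) (hp1 : p < 1) (b : Bool) : 0 < bernoulliWeight p b := by
  cases b <;> simp [bernoulliWeight] <;> linarith

lemma renyiDelta_eq_rpow (hp0 : 0 < p) (hp1 : p < 1) (α : ℝ) :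
    renyiDelta p α = p ^ α * (1 - p) ^ (1 - α) + (1 - p) ^ α * p ^ (1 - α) := by
  have hq : 0 < 1 - p := by linarith
  rw [renyiDelta, Real.div_rpow hq.le hp0.le, Real.div_rpow hp0.le hq.le,
    Real.rpow_sub hp0, Real.rpow_sub hq, Real.rpow_one, Real.rpow_one]
  field_simp
  ring

lemma one_le_renyiDelta (hp0 : 0 < p) (hp1 : p < 1) {α : ℝ} (hα : 1 ≤ α) :
    1 ≤ renyiDelta p α := by
  have hq : 0 < 1 - p := by linarith
  have hmean : p * ((1 - p) / p) + (1 - p) * (p / (1 - p)) = 1 := by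
    field_simp
    ring
  have := (convexOn_rpow hα).2 (Set.mem_Ici.2 (by positivity : (0:ℝ) ≤ (1 - p) / p))
    (Set.mem_Ici.2 (by positivity : (0:ℝ) ≤ p / (1 - p))) hp0.le hq.le (by ring)
  simpa [smul_eq_mul, hmean, renyiDelta] using this

lemma sum_bernoulliWeight_xor_rpow (hp0 : 0 < p) (hp1 : p < 1) (α : ℝ) (x x' : Bool) :
    ∑ b, bernoulliWeight p (xor b x) ^ α * bernoulliWeight p (xor b x') ^ (1 - α)
      = if x = x' then 1 else renyiDelta p α := by
  have hp := rpow_mul_rpow_one_sub hp0.le α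
  have hq := rpow_mul_rpow_one_sub (sub_pos.2 hp1).le α
  cases x <;> cases x' <;> simp [bernoulliWeight, hp, hq, renyiDelta_eq_rpow hp0 hp1, add_comm]

end Bernoulli

section Probability

variable {Ω : Type*} [MeasurableSpace Ω] {P : Measure Ω}

lemma ProbabilityTheory.iIndepFun.measure_pi_preimage_singleton {ι : Type*} [Fintype ι]
    {β : ι → Type*} [∀ i, MeasurableSpace (β i)] [∀ i, MeasurableSingletonClass (β i)]
    {f : ∀ i, Ω → β i}
    (hf : ∀ i, Measurable (f i)) (hind : iIndepFun f P) (m : ∀ i, β i) :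
    P ((fun ω i => f i ω) ⁻¹' {m}) = ∏ i, P (f i ⁻¹' {m i}) := by
  have := hind.isProbabilityMeasure
  rw [← Measure.map_apply (measurable_pi_lambda _ hf) (measurableSet_singleton m),
    hind.map_fun_eq_pi_map fun i => (hf i).aemeasurable, Measure.pi_singleton]
  exact Finset.prod_congr rfl fun i _ => Measure.map_apply (hf i) (measurableSet_singleton _)

lemma measure_preimage_singleton_eq_bernoulliWeight [IsProbabilityMeasure P] {B : Ω → Bool}
    (hB : Measurable B) {p : ℝ} (hp0 : 0 ≤ p) (hBp : P {ω | B ω = true} = ENNReal.ofReal p)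
    (b : Bool) : P (B ⁻¹' {b}) = ENNReal.ofReal (bernoulliWeight p b) := by
  change P (B ⁻¹' {true}) = _ at hBp
  cases b
  · have hcompl : B ⁻¹' {false} = (B ⁻¹' {true})ᶜ := by ext; simp
    rw [hcompl, prob_compl_eq_one_sub (hB (measurableSet_singleton true)), hBp,
      bernoulliWeight, if_neg Bool.false_ne_true, ENNReal.ofReal_sub _ hp0, ENNReal.ofReal_one]
  · exact hBp

lemma ProbabilityTheory.iIndepFun.measure_pi_preimage_singleton_eq_prod_bernoulliWeight
    {ι : Type*} [Fintype ι] {N : ι → Ω → Bool} (hN : ∀ t, Measurable (N t))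
    (hind : iIndepFun N P) {p : ℝ} (hp0 : 0 ≤ p)
    (hNp : ∀ t, P {ω | N t ω = true} = ENNReal.ofReal p) (m : ι → Bool) :
    P ((fun ω t => N t ω) ⁻¹' {m}) = ∏ t, ENNReal.ofReal (bernoulliWeight p (m t)) := by
  have := hind.isProbabilityMeasure
  rw [hind.measure_pi_preimage_singleton hN m]
  exact Finset.prod_congr rfl fun t _ =>
    measure_preimage_singleton_eq_bernoulliWeight (hN t) hp0 (hNp t) _

lemma map_xor_channel_apply_singleton [DiscreteMeasurableSpace Ω] {ι : Type*} [Fintype ι]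
    {X a N : ι → Ω → Bool} {p : ℝ}
    (hind : IndepFun (fun ω => (fun t => X t ω, fun t => a t ω)) (fun ω t => N t ω) P)
    (hN : ∀ m, P ((fun ω t => N t ω) ⁻¹' {m})
      = ∏ t, ENNReal.ofReal (bernoulliWeight p (m t)))
    (c : Bool → Bool → Bool) (x y av : ι → Bool) :
    P.map (fun ω => (fun t => X t ω, fun t => xor (c (X t ω) (a t ω)) (N t ω),
        fun t => a t ω)) {(x, y, av)}
      = P ((fun ω => (fun t => X t ω, fun t => a t ω)) ⁻¹' {(x, av)})
          * ∏ t, ENNReal.ofReal (bernoulliWeight p (xor (y t) (c (x t) (av t)))) := by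
  have hset : (fun ω => (fun t => X t ω, fun t => xor (c (X t ω) (a t ω)) (N t ω),
        fun t => a t ω)) ⁻¹' {(x, y, av)}
      = (fun ω => (fun t => X t ω, fun t => a t ω)) ⁻¹' {(x, av)}
        ∩ (fun ω t => N t ω) ⁻¹' {fun t => xor (y t) (c (x t) (av t))} := by
    ext ω
    simp only [Set.mem_preimage, Set.mem_singleton_iff, Set.mem_inter_iff, Prod.mk.injEq,
      funext_iff]
    constructor
    · rintro ⟨hx, hy, hav⟩
      refine ⟨⟨hx, hav⟩, fun t => ?_⟩
      rw [← hy t, hx t, hav t]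
      cases c (x t) (av t) <;> simp
    · rintro ⟨⟨hx, hav⟩, hn⟩
      refine ⟨hx, fun t => ?_, hav⟩
      rw [hn t, hx t, hav t]
      cases c (x t) (av t) <;> simp
  rw [Measure.map_apply .of_discrete (measurableSet_singleton _), hset,
    hind.measure_inter_preimage_eq_mul _ _ (measurableSet_singleton _)
      (measurableSet_singleton _), hN]

lemma integral_comp_eq_sum_measure_preimage [IsFiniteMeasure P] {γ : Type*} [Fintype γ]
    [MeasurableSpace γ] [MeasurableSingletonClass γ] {U : Ω → γ} (hU : Measurable U)
    (g : γ → ℝ) : ∫ ω, g (U ω) ∂P = ∑ u, (P (U ⁻¹' {u})).toReal * g u := by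
  rw [← integral_map hU.aemeasurable (measurable_of_finite g).aestronglyMeasurable,
    integral_fintype .of_finite]
  simp [Measure.map_apply hU (measurableSet_singleton _), measureReal_def]

end Probability

lemma sum_rpow_mul_rpow_erasure_channel_le {ι : Type*} [Fintype ι] [DecidableEq ι] {p α : ℝ}
    (hp0 : 0 < p) (hp1 : p < 1) (hα : 1 ≤ α) (m : (ι → Bool) → (ι → Bool) → ℝ)
    (hm : ∀ x av, 0 ≤ m x av) :
    ∑ x : ι → Bool, ∑ y : ι → Bool, ∑ av : ι → Bool,
        (m x av * ∏ t, bernoulliWeight p (xor (y t) (x t))) ^ α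
          * (m x av * ∏ t, bernoulliWeight p (xor (y t) (av t && x t))) ^ (1 - α)
      ≤ ∑ x : ι → Bool, ∑ av : ι → Bool,
          m x av * renyiDelta p α ^ (Finset.univ.filter (fun t => av t = false)).card := by
  have hw := fun b => (bernoulliWeight_pos hp0 hp1 b).le
  have hδ := one_le_renyiDelta hp0 hp1 hα
  have hfactor : ∀ x av : Bool, (if x = (av && x) then 1 else renyiDelta p α)
      ≤ if av = false then renyiDelta p α else 1 := by
    intro x av
    cases x <;> cases av <;> simp [hδ]
  calc ∑ x : ι → Bool, ∑ y : ι → Bool, ∑ av : ι → Bool,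
        (m x av * ∏ t, bernoulliWeight p (xor (y t) (x t))) ^ α
          * (m x av * ∏ t, bernoulliWeight p (xor (y t) (av t && x t))) ^ (1 - α)
      = ∑ x : ι → Bool, ∑ av : ι → Bool,
          m x av * ∏ t, if x t = (av t && x t) then 1 else renyiDelta p α := by
        refine Finset.sum_congr rfl fun x _ => ?_
        rw [Finset.sum_comm]
        refine Finset.sum_congr rfl fun av _ => ?_
        simp_rw [mul_rpow_mul_mul_rpow_one_sub (hm x av) (Finset.prod_nonneg fun _ _ => hw _)
          (Finset.prod_nonneg fun _ _ => hw _)]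
        rw [← Finset.mul_sum, sum_prod_rpow_mul_prod_rpow
          (f := fun t b => bernoulliWeight p (xor b (x t)))
          (g := fun t b => bernoulliWeight p (xor b (av t && x t)))
          (fun _ _ => hw _) (fun _ _ => hw _)]
        simp_rw [sum_bernoulliWeight_xor_rpow hp0 hp1]
    _ ≤ ∑ x : ι → Bool, ∑ av : ι → Bool,
          m x av * ∏ t, if av t = false then renyiDelta p α else 1 := by
        gcongr with x _ av _ t
        · exact hm x av
        · exact hfactor _ _
    _ = _ := by simp [Finset.prod_ite]

section ErasureChannel

variable {ι : Type*} [Fintype ι] {p α : ℝ} {μ : (ι → Bool) × (ι → Bool) → ENNReal}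
  {Pn Qn : Measure ((ι → Bool) × (ι → Bool) × (ι → Bool))}

lemma erasure_channel_null_of_null (hp0 : 0 < p) (hp1 : p < 1)
    (hPn : ∀ x y av, Pn {(x, y, av)}
      = μ (x, av) * ∏ t, ENNReal.ofReal (bernoulliWeight p (xor (y t) (av t && x t))))
    (hQn : ∀ x y av, Qn {(x, y, av)}
      = μ (x, av) * ∏ t, ENNReal.ofReal (bernoulliWeight p (xor (y t) (x t))))
    (i : (ι → Bool) × (ι → Bool) × (ι → Bool)) (hi : Pn {i} = 0) : Qn {i} = 0 := by
  obtain ⟨x, y, av⟩ := i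
  have hprod : ∏ t, ENNReal.ofReal (bernoulliWeight p (xor (y t) (av t && x t))) ≠ 0 :=
    Finset.prod_ne_zero_iff.2 fun t _ =>
      (ENNReal.ofReal_pos.2 (bernoulliWeight_pos hp0 hp1 _)).ne'
  rw [hPn] at hi
  rw [hQn, (mul_eq_zero.1 hi).resolve_right hprod, zero_mul]

lemma sum_toReal_rpow_erasure_channel_le [DecidableEq ι] (hp0 : 0 < p) (hp1 : p < 1)
    (hα : 1 ≤ α)
    (hPn : ∀ x y av, Pn {(x, y, av)}
      = μ (x, av) * ∏ t, ENNReal.ofReal (bernoulliWeight p (xor (y t) (av t && x t))))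
    (hQn : ∀ x y av, Qn {(x, y, av)}
      = μ (x, av) * ∏ t, ENNReal.ofReal (bernoulliWeight p (xor (y t) (x t)))) :
    ∑ i, (Qn {i}).toReal ^ α * (Pn {i}).toReal ^ (1 - α)
      ≤ ∑ u, (μ u).toReal
          * renyiDelta p α ^ (Finset.univ.filter (fun t => u.2 t = false)).card := by
  have hw := fun b => (bernoulliWeight_pos hp0 hp1 b).le
  simp only [Fintype.sum_prod_type, hPn, hQn, ENNReal.toReal_mul, ENNReal.toReal_prod,
    ENNReal.toReal_ofReal (hw _)]
  exact sum_rpow_mul_rpow_erasure_channel_le hp0 hp1 hα (fun x av => (μ (x, av)).toReal)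
    fun _ _ => ENNReal.toReal_nonneg

end ErasureChannel

open Classical in
lemma renyiDivMeas_le_of_sum_le {S : Type*} [Fintype S] [MeasurableSpace S] {α E : ℝ}
    (hα : 1 < α) {μ ν : Measure S} (hsupp : ∀ i, ν {i} = 0 → μ {i} = 0)
    (hsum : ∑ i, (μ {i}).toReal ^ α * (ν {i}).toReal ^ (1 - α) ≤ E) (hE : 1 ≤ E) :
    renyiDivMeas α μ ν ≤ (((1 / (α * (α - 1))) * Real.log E : ℝ) : EReal) := by
  rw [renyiDivMeas, if_pos hsupp, EReal.coe_le_coe_iff]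
  have hαα : 0 < α * (α - 1) := mul_pos (by linarith) (by linarith)
  refine mul_le_mul_of_nonneg_left ?_ (by positivity)
  have hS : 0 ≤ ∑ i, (μ {i}).toReal ^ α * (ν {i}).toReal ^ (1 - α) := by positivity
  rcases hS.eq_or_lt with h0 | h0
  · rw [← h0, Real.log_zero]
    exact Real.log_nonneg hE
  · exact Real.log_le_log h0 hsum

theorem renyiDiv_binary_erasure_bound_general
    {Ω : Type*} [Fintype Ω] [MeasurableSpace Ω] [DiscreteMeasurableSpace Ω]
    (P : Measure Ω) [IsProbabilityMeasure P]
    (n : ℕ) (p α : ℝ) (hp0 : 0 < p) (hp1 : p < 1) (hα : 1 < α)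
    (X a N : Fin n → Ω → Bool)
    (hNdist : ∀ t, P {ω | N t ω = true} = ENNReal.ofReal p)
    (hNiid : iIndepFun N P)
    (hindep : IndepFun (fun ω => fun t => (X t ω, a t ω)) (fun ω => fun t => N t ω) P)
    (Y : Fin n → Ω → Bool)
    (hY : ∀ t ω, Y t ω = xor (a t ω && X t ω) (N t ω))
    (Pn Qn : Measure ((Fin n → Bool) × (Fin n → Bool) × (Fin n → Bool)))
    (hPn : Pn = P.map (fun ω => ((fun t => X t ω), (fun t => Y t ω), (fun t => a t ω))))
    (hQn : Qn = P.map (fun ω =>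
      ((fun t => X t ω), (fun t => xor (X t ω) (N t ω)), (fun t => a t ω)))) :
    renyiDivMeas α Qn Pn
      ≤ (((1 / (α * (α - 1))) * Real.log (∫ ω,
            (p * ((1 - p) / p) ^ α + (1 - p) * (p / (1 - p)) ^ α)
              ^ ((Finset.univ.filter (fun t : Fin n => a t ω = false)).card) ∂P) : ℝ)
          : EReal) := by
  classical
  obtain rfl : Y = fun t ω => xor (a t ω && X t ω) (N t ω) := funext fun t => funext (hY t)
  set U := fun ω => ((fun t => X t ω), (fun t => a t ω))
  have hU : IndepFun U (fun ω t => N t ω) P :=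
    hindep.comp (φ := fun v => (fun t => (v t).1, fun t => (v t).2)) .of_discrete measurable_id
  have hnoise := hNiid.measure_pi_preimage_singleton_eq_prod_bernoulliWeight
    (fun _ => .of_discrete) hp0.le hNdist
  have hPn_apply : ∀ x y av, Pn {(x, y, av)} = P (U ⁻¹' {(x, av)})
      * ∏ t, ENNReal.ofReal (bernoulliWeight p (xor (y t) (av t && x t))) := fun x y av => by
    rw [hPn]
    exact map_xor_channel_apply_singleton hU hnoise (fun x a => a && x) x y av
  have hQn_apply : ∀ x y av, Qn {(x, y, av)} = P (U ⁻¹' {(x, av)})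
      * ∏ t, ENNReal.ofReal (bernoulliWeight p (xor (y t) (x t))) := fun x y av => by
    rw [hQn]
    exact map_xor_channel_apply_singleton hU hnoise (fun x _ => x) x y av
  refine renyiDivMeas_le_of_sum_le hα (erasure_channel_null_of_null
    (μ := fun u => P (U ⁻¹' {u})) hp0 hp1 hPn_apply hQn_apply) ?_ ?_
  · refine (sum_toReal_rpow_erasure_channel_le (μ := fun u => P (U ⁻¹' {u})) hp0 hp1 hα.le
      hPn_apply hQn_apply).trans_eq ?_
    exact (integral_comp_eq_sum_measure_preimage .of_discrete
      fun u : (Fin n → Bool) × (Fin n → Bool) =>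
      renyiDelta p α ^ (Finset.univ.filter (fun t => u.2 t = false)).card).symm
  · calc (1 : ℝ) = ∫ _, (1 : ℝ) ∂P := by simp
      _ ≤ _ := integral_mono (integrable_const 1) .of_finite fun ω =>
          one_le_pow₀ (one_le_renyiDelta hp0 hp1 hα.le)

/-- Rényi divergence bound for the binary channel with erasures: the divergence of the
erasure-free reference law `Q_n` from the true law `P_n` of `(X, Y, a)` is bounded via
`δ(α)` raised to the number of erasures. -/
theorem renyiDiv_binary_erasure_bound
    {Ω : Type*} [Fintype Ω] [MeasurableSpace Ω] [DiscreteMeasurableSpace Ω]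
    (P : Measure Ω) [IsProbabilityMeasure P]
    (n : ℕ) (hn : 1 ≤ n) (p α : ℝ) (hp0 : 0 < p) (hp1 : p < 1) (hα : 1 < α)
    (X a N : Fin n → Ω → Bool)
    (hNdist : ∀ t, P {ω | N t ω = true} = ENNReal.ofReal p)
    (hNiid : iIndepFun N P)
    (hindep : IndepFun (fun ω => fun t => (X t ω, a t ω)) (fun ω => fun t => N t ω) P)
    (Y : Fin n → Ω → Bool)
    (hY : ∀ t ω, Y t ω = xor (a t ω && X t ω) (N t ω))
    (Pn Qn : Measure ((Fin n → Bool) × (Fin n → Bool) × (Fin n → Bool)))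
    (hPn : Pn = P.map (fun ω => ((fun t => X t ω), (fun t => Y t ω), (fun t => a t ω))))
    (hQn : Qn = P.map (fun ω =>
      ((fun t => X t ω), (fun t => xor (X t ω) (N t ω)), (fun t => a t ω)))) :
    renyiDivMeas α Qn Pn
      ≤ (((1 / (α * (α - 1))) * Real.log (∫ ω,
            (p * ((1 - p) / p) ^ α + (1 - p) * (p / (1 - p)) ^ α)
              ^ ((Finset.univ.filter (fun t : Fin n => a t ω = false)).card) ∂P) : ℝ)
          : EReal) :=
  renyiDiv_binary_erasure_bound_general P n p α hp0 hp1 hα X a N hNdist hNiid hindep Y hY Pn Qn hPn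
    hQn
end

section
/- Let n ≥ 1, k ≥ 1, σ > 0, S > 0, and let h = (h_1,…,h_k) ∈ ℝᵏ and r₁, r₂ ∈ ℝ. Let C ⊂ ℝⁿ be a nonempty finite codebook and Π the uniform distribution on C. For x ∈ ℝⁿ define g_t(x) = ∑_{i=1}^{k} h_i x_{t−i} (with x_j = 0 for j ≤ 0), and assume every x ∈ C satisfies ∑_{t=1}^{n} x_t² = nS, ∑_{t=1}^{n} x_t g_t(x) = nSr₁, and ∑_{t=1}^{n} g_t(x)² = nSr₂. Let θ > 0 and φ > 0 and let α > 1 satisfy α/(2σ²) + (1−α)θ > 0. Define the conditional densities on ℝⁿ: p(y|x) = (2πσ²)^{−n/2}·exp(−(1/(2σ²))∑_{t=1}^{n}(y_t − x_t − g_t(x))²) and q(y|x) = (θ/π)^{n/2}·exp(−θ·∑_{t=1}^{n}(y_t − φx_t)²). Then (1/n)·D_α(P_n‖Q_n) := (1/(n·α(α−1)))·ln( ∑_{x∈C} Π(x)·∫_{ℝⁿ} p(y|x)^{α} q(y|x)^{1−α} dy ) = −ln(2θσ²)/(2α) − ln(α + 2(1−α)θσ²)/(2α(α−1)) + θS·[(1−φ)²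 + 2(1−φ)r₁ + r₂] / (α + 2(1−α)θσ²). -/
open MeasureTheory
open scoped BigOperators

/-- Extension of a vector in `ℝⁿ` to integer indices, vanishing outside `{0,…,n-1}`. -/
noncomputable def extVec (n : ℕ) (x : Fin n → ℝ) (j : ℤ) : ℝ :=
  if h : 0 ≤ j ∧ j < (n : ℤ) then x ⟨j.toNat, by omega⟩ else 0

/-- The intersymbol interference signal `g_t(x) = ∑_{i=1}^k h_i x_{t-i}`
(with `x_j = 0` for out-of-range indices), in 0-based coordinates. -/
noncomputable def isiInterf (n k : ℕ) (h : Fin k → ℝ) (x : Fin n → ℝ) (t : Fin n) : ℝ :=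
  ∑ i : Fin k, h i * extVec n x ((t : ℤ) - ((i : ℤ) + 1))

/-! For a codeword `x`, the integrand `p(y|x)^α q(y|x)^(1-α)` is a constant times
`exp (-(P‖y - u‖² + Q‖y - v‖²))` with `u = x + g(x)`, `v = φ x`, `P = α/(2σ²)` and
`Q = (1-α)θ`. Completing the square splits this into a Gaussian of precision `P + Q > 0` in `y`
and the factor `exp (-(PQ/(P+Q)) ‖u - v‖²)`. The energy constraints make
`‖u - v‖² = (1-φ)²‖x‖² + 2(1-φ)⟨x, g(x)⟩ + ‖g(x)‖² = nS((1-φ)² + 2(1-φ)r₁ + r₂)` the same for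
every codeword, so the average over `C` is this common value, whose logarithm is explicit. -/

open Real

theorem integral_exp_neg_mul_sub_sq (A μ : ℝ) :
    ∫ y : ℝ, exp (-(A * (y - μ) ^ 2)) = √(π / A) := by
  simpa only [neg_mul] using
    (integral_sub_right_eq_self (fun y => exp (-A * y ^ 2)) μ).trans (integral_gaussian A)

theorem mul_sub_sq_add_mul_sub_sq {P Q : ℝ} (hPQ : P + Q ≠ 0) (u v y : ℝ) :
    P * (y - u) ^ 2 + Q * (y - v) ^ 2
      = (P + Q) * (y - (P * u + Q * v) / (P + Q)) ^ 2 + P * Q / (P + Q) * (u - v) ^ 2 := by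
  field_simp
  ring

theorem integral_exp_neg_mul_sum_sub_sq_add_mul_sum_sub_sq {ι : Type*} [Fintype ι] {P Q : ℝ}
    (hPQ : 0 < P + Q) (u v : ι → ℝ) :
    ∫ y : ι → ℝ, exp (-(P * ∑ t, (y t - u t) ^ 2 + Q * ∑ t, (y t - v t) ^ 2))
      = exp (-(P * Q / (P + Q) * ∑ t, (u t - v t) ^ 2)) * √(π / (P + Q)) ^ Fintype.card ι := by
  set m : ι → ℝ := fun t => (P * u t + Q * v t) / (P + Q)
  have hsplit (y : ι → ℝ) : exp (-(P * ∑ t, (y t - u t) ^ 2 + Q * ∑ t, (y t - v t) ^ 2))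
      = exp (-(P * Q / (P + Q) * ∑ t, (u t - v t) ^ 2))
        * ∏ t, exp (-((P + Q) * (y t - m t) ^ 2)) := by
    have hsq : P * ∑ t, (y t - u t) ^ 2 + Q * ∑ t, (y t - v t) ^ 2
        = ∑ t, (P + Q) * (y t - m t) ^ 2 + P * Q / (P + Q) * ∑ t, (u t - v t) ^ 2 := by
      simp only [Finset.mul_sum, ← Finset.sum_add_distrib]
      exact Finset.sum_congr rfl fun t _ => mul_sub_sq_add_mul_sub_sq hPQ.ne' _ _ _
    rw [hsq, ← exp_sum, ← exp_add, Finset.sum_neg_distrib]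
    ring_nf
  simp_rw [hsplit]
  rw [integral_const_mul,
    integral_fintype_prod_volume_eq_prod (fun t z => exp (-((P + Q) * (z - m t) ^ 2)))]
  simp_rw [integral_exp_neg_mul_sub_sq, Finset.prod_const, Finset.card_univ]

theorem mul_exp_rpow_mul_mul_exp_rpow {a b : ℝ} (ha : 0 ≤ a) (hb : 0 ≤ b) (s t α β : ℝ) :
    (a * exp s) ^ α * (b * exp t) ^ β = a ^ α * b ^ β * exp (α * s + β * t) := by
  rw [mul_rpow ha (exp_pos s).le, mul_rpow hb (exp_pos t).le, ← exp_mul, ← exp_mul,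
    mul_mul_mul_comm, ← exp_add, mul_comm s, mul_comm t]

theorem integral_gaussian_rpow_mul_gaussian_rpow {ι : Type*} [Fintype ι] {σ θ α : ℝ}
    (hσ : 0 < σ) (hθ : 0 < θ) (hpos : 0 < α / (2 * σ ^ 2) + (1 - α) * θ) (u v : ι → ℝ) :
    ∫ y : ι → ℝ, ((2 * π * σ ^ 2) ^ (-(Fintype.card ι : ℝ) / 2)
          * exp (-(1 / (2 * σ ^ 2)) * ∑ t, (y t - u t) ^ 2)) ^ α
        * ((θ / π) ^ ((Fintype.card ι : ℝ) / 2) * exp (-θ * ∑ t, (y t - v t) ^ 2)) ^ (1 - α)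
      = exp ((Fintype.card ι : ℝ) / 2
            * ((1 - α) * log (2 * θ * σ ^ 2) - log (α + 2 * (1 - α) * θ * σ ^ 2))
          - α * (1 - α) * θ / (α + 2 * (1 - α) * θ * σ ^ 2) * ∑ t, (u t - v t) ^ 2) := by
  set P := α / (2 * σ ^ 2)
  set Q := (1 - α) * θ
  have hσ2 : 0 < σ ^ 2 := by positivity
  have h2πσ : 0 < 2 * π * σ ^ 2 := by positivity
  have hθπ : 0 < θ / π := by positivity
  have hintegrand (y : ι → ℝ) :
      ((2 * π * σ ^ 2) ^ (-(Fintype.card ι : ℝ) / 2)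
          * exp (-(1 / (2 * σ ^ 2)) * ∑ t, (y t - u t) ^ 2)) ^ α
        * ((θ / π) ^ ((Fintype.card ι : ℝ) / 2) * exp (-θ * ∑ t, (y t - v t) ^ 2)) ^ (1 - α)
      = (2 * π * σ ^ 2) ^ (-(Fintype.card ι : ℝ) / 2 * α)
          * (θ / π) ^ ((Fintype.card ι : ℝ) / 2 * (1 - α))
          * exp (-(P * ∑ t, (y t - u t) ^ 2 + Q * ∑ t, (y t - v t) ^ 2)) := by
    rw [mul_exp_rpow_mul_mul_exp_rpow (rpow_nonneg h2πσ.le _) (rpow_nonneg hθπ.le _),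
      ← rpow_mul h2πσ.le, ← rpow_mul hθπ.le]
    congr 2
    ring
  have hD : α + 2 * (1 - α) * θ * σ ^ 2 = 2 * σ ^ 2 * (P + Q) := by
    simp only [P, Q]
    field_simp
  have hlog2πσ : log (2 * π * σ ^ 2) = log 2 + log π + log (σ ^ 2) := by
    rw [log_mul (by positivity) hσ2.ne', log_mul two_ne_zero pi_pos.ne']
  have hlog2θσ : log (2 * θ * σ ^ 2) = log 2 + log θ + log (σ ^ 2) := by
    rw [log_mul (by positivity) hσ2.ne', log_mul two_ne_zero hθ.ne']
  have hlogD : log (2 * σ ^ 2 * (P + Q)) = log 2 + log (σ ^ 2) + log (P + Q) := by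
    rw [log_mul (by positivity) hpos.ne', log_mul two_ne_zero hσ2.ne']
  simp_rw [hintegrand]
  rw [integral_const_mul, integral_exp_neg_mul_sum_sub_sq_add_mul_sum_sub_sq hpos, hD,
    ← exp_log (by positivity : 0 < (2 * π * σ ^ 2) ^ (-(Fintype.card ι : ℝ) / 2 * α)
      * (θ / π) ^ ((Fintype.card ι : ℝ) / 2 * (1 - α))
      * (exp (-(P * Q / (P + Q) * ∑ t, (u t - v t) ^ 2)) * √(π / (P + Q)) ^ Fintype.card ι))]
  congr 1
  rw [log_mul (by positivity) (by positivity), log_mul (by positivity) (by positivity),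
    log_mul (by positivity) (by positivity), log_rpow h2πσ, log_rpow hθπ, log_exp, log_pow,
    log_sqrt (by positivity), log_div hθ.ne' pi_pos.ne', log_div pi_pos.ne' hpos.ne',
    hlog2πσ, hlog2θσ, hlogD]
  simp only [P, Q]
  field_simp
  ring

theorem sum_add_sub_mul_sq {ι : Type*} [Fintype ι] (x g : ι → ℝ) (φ : ℝ) :
    ∑ t, (x t + g t - φ * x t) ^ 2
      = (1 - φ) ^ 2 * ∑ t, x t ^ 2 + 2 * (1 - φ) * ∑ t, x t * g t + ∑ t, g t ^ 2 := by
  simp only [Finset.mul_sum, ← Finset.sum_add_distrib]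
  exact Finset.sum_congr rfl fun t _ => by ring

theorem renyiDiv_isi_channel_eq_general
    (n k : ℕ) (hn : 1 ≤ n) (σ S : ℝ) (hσ : 0 < σ)
    (h : Fin k → ℝ) (r₁ r₂ : ℝ)
    (C : Finset (Fin n → ℝ)) (hC : C.Nonempty)
    (hpow : ∀ x ∈ C, ∑ t, (x t) ^ 2 = (n : ℝ) * S)
    (hcorr : ∀ x ∈ C, ∑ t, x t * isiInterf n k h x t = (n : ℝ) * S * r₁)
    (hinterf : ∀ x ∈ C, ∑ t, (isiInterf n k h x t) ^ 2 = (n : ℝ) * S * r₂)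
    (θ φ α : ℝ) (hθ : 0 < θ) (hα : 1 < α)
    (hpos : 0 < α / (2 * σ ^ 2) + (1 - α) * θ)
    (p q : (Fin n → ℝ) → (Fin n → ℝ) → ℝ)
    (hp : ∀ y x, p y x = (2 * Real.pi * σ ^ 2) ^ (-(n : ℝ) / 2)
      * Real.exp (-(1 / (2 * σ ^ 2)) * ∑ t, (y t - x t - isiInterf n k h x t) ^ 2))
    (hq : ∀ y x, q y x = (θ / Real.pi) ^ ((n : ℝ) / 2)
      * Real.exp (-θ * ∑ t, (y t - φ * x t) ^ 2)) :
    (1 / ((n : ℝ) * α * (α - 1))) * Real.log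
        (∑ x ∈ C, (1 / (C.card : ℝ)) * ∫ y : Fin n → ℝ, (p y x) ^ α * (q y x) ^ (1 - α))
      = -Real.log (2 * θ * σ ^ 2) / (2 * α)
        - Real.log (α + 2 * (1 - α) * θ * σ ^ 2) / (2 * α * (α - 1))
        + θ * S * ((1 - φ) ^ 2 + 2 * (1 - φ) * r₁ + r₂)
            / (α + 2 * (1 - α) * θ * σ ^ 2) := by
  set D := α + 2 * (1 - α) * θ * σ ^ 2
  set K := (1 - φ) ^ 2 + 2 * (1 - φ) * r₁ + r₂
  set E : ℝ := (n : ℝ) / 2 * ((1 - α) * log (2 * θ * σ ^ 2) - log D)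
    - α * (1 - α) * θ / D * ((n : ℝ) * S * K)
  have hint : ∀ x ∈ C, ∫ y : Fin n → ℝ, (p y x) ^ α * (q y x) ^ (1 - α) = exp E := by
    intro x hx
    have hdist : ∑ t, (x t + isiInterf n k h x t - φ * x t) ^ 2 = (n : ℝ) * S * K := by
      rw [sum_add_sub_mul_sq, hpow x hx, hcorr x hx, hinterf x hx]
      ring
    simp_rw [hp, hq, sub_sub]
    simpa only [Fintype.card_fin, hdist] using
      integral_gaussian_rpow_mul_gaussian_rpow hσ hθ hpos
        (fun t => x t + isiInterf n k h x t) (fun t => φ * x t)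
  have hcard : (C.card : ℝ) ≠ 0 := by exact_mod_cast hC.card_pos.ne'
  have hD : D ≠ 0 := by
    have : D = 2 * σ ^ 2 * (α / (2 * σ ^ 2) + (1 - α) * θ) := by
      simp only [D]
      field_simp
    rw [this]
    positivity
  have hn0 : (n : ℝ) ≠ 0 := Nat.cast_ne_zero.mpr (by omega)
  rw [Finset.sum_congr rfl fun x hx => by rw [hint x hx], Finset.sum_const, nsmul_eq_mul,
    ← mul_assoc, mul_one_div_cancel hcard, one_mul, log_exp]
  simp only [E]
  field_simp [show α - 1 ≠ 0 by linarith, show α ≠ 0 by linarith]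
  ring

/-- Exact computation of the normalized Rényi divergence between the Gaussian ISI channel
`P_n` and the memoryless Gaussian reference channel `Q_n` with gain `φ` and noise
variance `1/(2θ)`, for constant-composition-type codebooks. -/
theorem renyiDiv_isi_channel_eq
    (n k : ℕ) (hn : 1 ≤ n) (hk : 1 ≤ k) (σ S : ℝ) (hσ : 0 < σ) (hS : 0 < S)
    (h : Fin k → ℝ) (r₁ r₂ : ℝ)
    (C : Finset (Fin n → ℝ)) (hC : C.Nonempty)
    (hpow : ∀ x ∈ C, ∑ t, (x t) ^ 2 = (n : ℝ) * S)
    (hcorr : ∀ x ∈ C, ∑ t, x t * isiInterf n k h x t = (n : ℝ) * S * r₁)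
    (hinterf : ∀ x ∈ C, ∑ t, (isiInterf n k h x t) ^ 2 = (n : ℝ) * S * r₂)
    (θ φ α : ℝ) (hθ : 0 < θ) (hφ : 0 < φ) (hα : 1 < α)
    (hpos : 0 < α / (2 * σ ^ 2) + (1 - α) * θ)
    (p q : (Fin n → ℝ) → (Fin n → ℝ) → ℝ)
    (hp : ∀ y x, p y x = (2 * Real.pi * σ ^ 2) ^ (-(n : ℝ) / 2)
      * Real.exp (-(1 / (2 * σ ^ 2)) * ∑ t, (y t - x t - isiInterf n k h x t) ^ 2))
    (hq : ∀ y x, q y x = (θ / Real.pi) ^ ((n : ℝ) / 2)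
      * Real.exp (-θ * ∑ t, (y t - φ * x t) ^ 2)) :
    (1 / ((n : ℝ) * α * (α - 1))) * Real.log
        (∑ x ∈ C, (1 / (C.card : ℝ)) * ∫ y : Fin n → ℝ, (p y x) ^ α * (q y x) ^ (1 - α))
      = -Real.log (2 * θ * σ ^ 2) / (2 * α)
        - Real.log (α + 2 * (1 - α) * θ * σ ^ 2) / (2 * α * (α - 1))
        + θ * S * ((1 - φ) ^ 2 + 2 * (1 - φ) * r₁ + r₂)
            / (α + 2 * (1 - α) * θ * σ ^ 2) :=
  renyiDiv_isi_channel_eq_general n k hn σ S hσ h r₁ r₂ C hC hpow hcorr hinterf θ φ α hθ hα hpos p q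
    hp hq
end
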